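/- arXiv:0905.0064 — 5 statements merged into one kernel-verified Lean document; each statement's English description precedes it below -/
import Mathlib

section
/- Every thin cut in a thin cut system is either an A-cut (nested with all other thin cuts) or a B-cut (its *-complement has exactly one cut component). -/
variable {V : Type*}

/-- The boundary `NC` of a vertex set: vertices outside `C` adjacent to `C`. -/
def bdry (G : SimpleGraph V) (C : Set V) : Set V :=
  {v | v ∉ C ∧ ∃ u ∈ C, G.Adj u v}

/-- The `*`-complement: `C* = VX \ (C ∪ NC)`. -/
def cstar (G : SimpleGraph V) (C : Set V) : Set V :=
  (C ∪ bdry G C)ᶜ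

/-- A set of vertices is connected if its induced subgraph is connected. -/
def ConnSet (G : SimpleGraph V) (C : Set V) : Prop :=
  (G.induce C).Connected

/-- `Q` is a component of `A`: a maximal connected subset of `A`. -/
def IsCompOf (G : SimpleGraph V) (Q A : Set V) : Prop :=
  Q ⊆ A ∧ ConnSet G Q ∧ ∀ R : Set V, Q ⊆ R → R ⊆ A → ConnSet G R → R = Q

/-- `A`, `B` form a pair of opposite corners of `C` and `D`. -/
def OppCorners (G : SimpleGraph V) (C D A B : Set V) : Prop :=
  (A = C ∩ D ∧ B = cstar G C ∩ cstar G D) ∨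
  (A = cstar G C ∩ cstar G D ∧ B = C ∩ D) ∨
  (A = C ∩ cstar G D ∧ B = cstar G C ∩ D) ∨
  (A = cstar G C ∩ D ∧ B = C ∩ cstar G D)

/-- Cut system (Definition 2.1). -/
structure IsCutSystem (G : SimpleGraph V) (𝒞 : Set (Set V)) : Prop where
  nonempty : ∀ C ∈ 𝒞, C.Nonempty
  conn : ∀ C ∈ 𝒞, ConnSet G C
  finBd : ∀ C ∈ 𝒞, (bdry G C).Finite
  star_star : ∀ C ∈ 𝒞, cstar G (cstar G C) = C
  a1 : ∀ C ∈ 𝒞, ∀ D ∈ 𝒞, ∀ A B : Set V, OppCorners G C D A B →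
    (∃ E ∈ 𝒞, E ⊆ A) → (∃ E ∈ 𝒞, E ⊆ B) →
    ∀ Q : Set V, (IsCompOf G Q A ∨ IsCompOf G Q B) → (∃ E ∈ 𝒞, E ⊆ Q) → Q ∈ 𝒞
  a2 : ∀ C ∈ 𝒞, ∀ D ∈ 𝒞, ∃ A B : Set V, OppCorners G C D A B ∧
    (∃ E ∈ 𝒞, E ⊆ A) ∧ (∃ E ∈ 𝒞, E ⊆ B)

/-- A thin cut system: all cuts have boundary of the minimal cardinality `κ`. -/
structure IsThinCutSystem (G : SimpleGraph V) (𝒞 : Set (Set V)) (κ : ℕ) : Prop where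
  toIsCutSystem : IsCutSystem G 𝒞
  thin : ∀ C ∈ 𝒞, (bdry G C).ncard = κ

/-- A pre-cut: a cut or the `*`-complement of a cut. -/
def PreCut (G : SimpleGraph V) (𝒞 : Set (Set V)) (E : Set V) : Prop :=
  E ∈ 𝒞 ∨ ∃ C ∈ 𝒞, E = cstar G C

/-- `A` is an isolated corner of the pair `C`, `D`: a corner containing no cut,
whose two adjacent links are empty. -/
def IsolatedCorner (G : SimpleGraph V) (𝒞 : Set (Set V)) (C D A : Set V) : Prop :=
  (¬ ∃ E ∈ 𝒞, E ⊆ A) ∧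
  ((A = C ∩ D ∧ C ∩ bdry G D = ∅ ∧ D ∩ bdry G C = ∅) ∨
   (A = C ∩ cstar G D ∧ C ∩ bdry G D = ∅ ∧ cstar G D ∩ bdry G C = ∅) ∨
   (A = cstar G C ∩ D ∧ cstar G C ∩ bdry G D = ∅ ∧ D ∩ bdry G C = ∅) ∨
   (A = cstar G C ∩ cstar G D ∧ cstar G C ∩ bdry G D = ∅ ∧ cstar G D ∩ bdry G C = ∅))

/-- Two sets are nested if they have an isolated corner. -/
def Nested (G : SimpleGraph V) (𝒞 : Set (Set V)) (C D : Set V) : Prop :=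
  ∃ A : Set V, IsolatedCorner G 𝒞 C D A

/-- A slice: a component of the complement of a separator which is not a cut. -/
def IsSlice (G : SimpleGraph V) (𝒞 : Set (Set V)) (Q : Set V) : Prop :=
  (∃ C ∈ 𝒞, IsCompOf G Q (bdry G C)ᶜ) ∧ Q ∉ 𝒞

/-- `Y` is `k`-inseparable (Definition 2.12). -/
def Insep (G : SimpleGraph V) (k : ℕ) (Y : Set V) : Prop :=
  (Y.Infinite ∨ k + 1 ≤ Y.ncard) ∧
  ∀ C : Set V, (bdry G C).Finite → (bdry G C).ncard ≤ k →
    Y ⊆ C ∪ bdry G C ∨ Y ⊆ cstar G C ∪ bdry G C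

/-- `C` separates `Y₁` from `Y₂` (Definition 2.10, one orientation). -/
def Separates (G : SimpleGraph V) (C Y₁ Y₂ : Set V) : Prop :=
  Y₁ ⊆ C ∪ bdry G C ∧ Y₂ ⊆ cstar G C ∪ bdry G C ∧
  ¬ Y₁ ⊆ bdry G C ∧ ¬ Y₂ ⊆ bdry G C

/-- The set `S` separates the vertices `x` and `y`. -/
def SepVert (G : SimpleGraph V) (S : Set V) (x y : V) : Prop :=
  x ∉ S ∧ y ∉ S ∧ ∀ K : Set V, IsCompOf G K Sᶜ → x ∈ K → y ∉ K

/-- `S` is a tight `x`-`y`-separator. -/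
def TightSep (G : SimpleGraph V) (x y : V) (S : Set V) : Prop :=
  ∃ A B : Set V, IsCompOf G A Sᶜ ∧ IsCompOf G B Sᶜ ∧ A ≠ B ∧ x ∈ A ∧ y ∈ B ∧
    ∀ s ∈ S, (∃ a ∈ A, G.Adj s a) ∧ (∃ b ∈ B, G.Adj s b)

/-- `μ(C)`: the number of cuts of the system not nested with `C`. -/
noncomputable def mu (G : SimpleGraph V) (𝒞 : Set (Set V)) (C : Set V) : ℕ :=
  {D ∈ 𝒞 | ¬ Nested G 𝒞 C D}.ncard


namespace Stmt11Aux

variable {G : SimpleGraph V}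

lemma bdry_not_mem {C : Set V} {v : V} (hv : v ∈ bdry G C) : v ∉ C := hv.1

lemma adj_mem {C : Set V} {u v : V} (hu : u ∈ C) (h : G.Adj u v) : v ∈ C ∪ bdry G C := by
  by_cases hv : v ∈ C
  · exact Or.inl hv
  · exact Or.inr ⟨hv, u, hu, h⟩

lemma mem_cstar {C : Set V} {v : V} : v ∈ cstar G C ↔ v ∉ C ∧ v ∉ bdry G C := by
  simp [cstar, not_or]

lemma tri {C : Set V} (v : V) : v ∈ C ∨ v ∈ bdry G C ∨ v ∈ cstar G C := by
  by_cases h1 : v ∈ C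
  · exact Or.inl h1
  by_cases h2 : v ∈ bdry G C
  · exact Or.inr (Or.inl h2)
  · exact Or.inr (Or.inr (mem_cstar.2 ⟨h1, h2⟩))

lemma cstar_not_mem {C : Set V} {v : V} (hv : v ∈ cstar G C) : v ∉ C :=
  (mem_cstar.1 hv).1

lemma cstar_not_bdry {C : Set V} {v : V} (hv : v ∈ cstar G C) : v ∉ bdry G C :=
  (mem_cstar.1 hv).2

lemma not_adj_cstar {C : Set V} {u v : V} (hu : u ∈ C) (hv : v ∈ cstar G C) :
    ¬ G.Adj u v := by
  intro hadj
  rcases adj_mem hu hadj with h | h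
  · exact cstar_not_mem hv h
  · exact cstar_not_bdry hv h

lemma bdry_cstar_subset (G : SimpleGraph V) (C : Set V) :
    bdry G (cstar G C) ⊆ bdry G C := by
  rintro v ⟨hv, u, hu, hadj⟩
  rcases tri (C := C) v with h1 | h1 | h1
  · exact absurd hadj.symm (not_adj_cstar h1 hu)
  · exact h1
  · exact absurd h1 hv

def ReachIn (G : SimpleGraph V) (S : Set V) (x y : V) : Prop :=
  ∃ w : G.Walk x y, ∀ z ∈ w.support, z ∈ S

lemma ReachIn.mem_left {S : Set V} {x y : V} (h : ReachIn G S x y) : x ∈ S := by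
  obtain ⟨w, hw⟩ := h; exact hw x w.start_mem_support

lemma ReachIn.mem_right {S : Set V} {x y : V} (h : ReachIn G S x y) : y ∈ S := by
  obtain ⟨w, hw⟩ := h; exact hw y w.end_mem_support

lemma reachIn_refl {S : Set V} {x : V} (hx : x ∈ S) : ReachIn G S x x :=
  ⟨SimpleGraph.Walk.nil, by simp [hx]⟩

lemma ReachIn.symm {S : Set V} {x y : V} (h : ReachIn G S x y) : ReachIn G S y x := by
  obtain ⟨w, hw⟩ := h
  exact ⟨w.reverse, by
    intro z hz; rw [SimpleGraph.Walk.support_reverse, List.mem_reverse] at hz; exact hw z hz⟩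

lemma ReachIn.trans {S : Set V} {x y z : V} (h1 : ReachIn G S x y) (h2 : ReachIn G S y z) :
    ReachIn G S x z := by
  obtain ⟨w1, hw1⟩ := h1; obtain ⟨w2, hw2⟩ := h2
  refine ⟨w1.append w2, ?_⟩
  intro u hu
  rw [SimpleGraph.Walk.mem_support_append_iff] at hu
  rcases hu with hu | hu
  · exact hw1 u hu
  · exact hw2 u hu

lemma ReachIn.mono {S T : Set V} {x y : V} (h : ReachIn G S x y) (hST : S ⊆ T) :
    ReachIn G T x y := by
  obtain ⟨w, hw⟩ := h; exact ⟨w, fun z hz => hST (hw z hz)⟩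

lemma reachIn_of_reachable {S : Set V} {x y : V} (hx : x ∈ S) (hy : y ∈ S)
    (h : (G.induce S).Reachable ⟨x, hx⟩ ⟨y, hy⟩) : ReachIn G S x y := by
  obtain ⟨p⟩ := h
  refine ⟨p.map (SimpleGraph.Embedding.induce S).toHom, ?_⟩
  intro z hz
  replace hz : z ∈ (p.map (SimpleGraph.Embedding.induce S).toHom).support := hz
  rw [SimpleGraph.Walk.support_map, List.mem_map] at hz
  obtain ⟨⟨z', hz'⟩, _, rfl⟩ := hz
  exact hz'

lemma reachable_of_reachIn {S : Set V} {x y : V} (h : ReachIn G S x y) :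
    (G.induce S).Reachable ⟨x, h.mem_left⟩ ⟨y, h.mem_right⟩ := by
  obtain ⟨w, hw⟩ := h
  induction w with
  | nil => rfl
  | @cons a b c hadj p ih =>
    have hb : b ∈ S := hw b (by simp [SimpleGraph.Walk.support_cons])
    have ha : a ∈ S := hw a (by simp [SimpleGraph.Walk.support_cons])
    have htail : ∀ z ∈ p.support, z ∈ S := fun z hz =>
      hw z (by simp [SimpleGraph.Walk.support_cons, hz])
    have h1 : (G.induce S).Adj ⟨a, ha⟩ ⟨b, hb⟩ := hadj
    exact (h1.reachable).trans (ih htail)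

lemma connSet_iff {S : Set V} :
    ConnSet G S ↔ S.Nonempty ∧ ∀ x ∈ S, ∀ y ∈ S, ReachIn G S x y := by
  constructor
  · intro h
    rw [ConnSet, SimpleGraph.connected_iff] at h
    obtain ⟨hpre, hne⟩ := h
    obtain ⟨⟨x0, hx0⟩⟩ := hne
    refine ⟨⟨x0, hx0⟩, fun x hx y hy => ?_⟩
    exact reachIn_of_reachable hx hy (hpre ⟨x, hx⟩ ⟨y, hy⟩)
  · rintro ⟨⟨x0, hx0⟩, hreach⟩
    rw [ConnSet, SimpleGraph.connected_iff]
    refine ⟨?_, ⟨⟨x0, hx0⟩⟩⟩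
    rintro ⟨x, hx⟩ ⟨y, hy⟩
    exact reachable_of_reachIn (hreach x hx y hy)

lemma reach_cross {S D : Set V} {x y : V} (h : ReachIn G S x y) (hx : x ∈ D) (hy : y ∉ D) :
    ∃ z ∈ S, z ∈ bdry G D := by
  obtain ⟨w, hw⟩ := h
  induction w with
  | nil => exact absurd hx hy
  | @cons a b c hadj p ih =>
    by_cases hb : b ∈ D
    · exact ih hb hy (fun z hz => hw z (by simp [SimpleGraph.Walk.support_cons, hz]))
    · exact ⟨b, hw b (by simp [SimpleGraph.Walk.support_cons]), hb, a, hx, hadj⟩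

lemma conn_subset_or {S D : Set V} (hS : ConnSet G S) (hdisj : S ∩ bdry G D = ∅) :
    S ⊆ D ∨ S ⊆ cstar G D := by
  rw [connSet_iff] at hS
  obtain ⟨hne, hreach⟩ := hS
  have hd := Set.eq_empty_iff_forall_notMem.mp hdisj
  by_cases hx : (S ∩ D).Nonempty
  · obtain ⟨x, hxS, hxD⟩ := hx
    left
    intro s hs
    by_contra hsD
    obtain ⟨z, hzS, hzB⟩ := reach_cross (hreach x hxS s hs) hxD hsD
    exact hd z ⟨hzS, hzB⟩
  · right
    intro s hs
    exact mem_cstar.2 ⟨fun hsD => hx ⟨s, hs, hsD⟩, fun hsB => hd s ⟨hs, hsB⟩⟩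

lemma connSet_union {S T : Set V} (h1 : ConnSet G S) (h2 : ConnSet G T)
    (hp : (S ∩ T).Nonempty) : ConnSet G (S ∪ T) := by
  rw [connSet_iff] at h1 h2 ⊢
  obtain ⟨p, hpS, hpT⟩ := hp
  have key : ∀ x ∈ S ∪ T, ReachIn G (S ∪ T) x p := by
    rintro x (hx | hx)
    · exact (h1.2 x hx p hpS).mono Set.subset_union_left
    · exact (h2.2 x hx p hpT).mono Set.subset_union_right
  exact ⟨⟨p, Or.inl hpS⟩, fun x hx y hy => (key x hx).trans (key y hy).symm⟩

lemma connSet_insert {S : Set V} {u v : V} (h : ConnSet G S) (hu : u ∈ S)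
    (hadj : G.Adj u v) : ConnSet G (insert v S) := by
  rw [connSet_iff] at h ⊢
  have hvu : ReachIn G (insert v S) v u := by
    refine ⟨SimpleGraph.Walk.cons hadj.symm SimpleGraph.Walk.nil, ?_⟩
    intro z hz
    simp only [SimpleGraph.Walk.support_cons, SimpleGraph.Walk.support_nil,
      List.mem_cons, List.mem_singleton] at hz
    rcases hz with rfl | rfl | h'
    · exact Set.mem_insert _ _
    · exact Set.mem_insert_of_mem _ hu
    · exact absurd h' List.not_mem_nil
  have key : ∀ x ∈ insert v S, ReachIn G (insert v S) x u := by
    intro x hx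
    rcases Set.mem_insert_iff.1 hx with rfl | hx
    · exact hvu
    · exact (h.2 x hx u hu).mono (Set.subset_insert _ _)
  exact ⟨⟨u, Set.mem_insert_of_mem _ hu⟩, fun x hx y hy => (key x hx).trans (key y hy).symm⟩

lemma comp_exists {E A : Set V} (hne : E.Nonempty) (hconn : ConnSet G E) (hEA : E ⊆ A) :
    ∃ Q : Set V, IsCompOf G Q A ∧ E ⊆ Q := by
  obtain ⟨e, he⟩ := hne
  refine ⟨{y | ReachIn G A e y}, ⟨?_, ?_, ?_⟩, ?_⟩
  · intro y hy; exact ReachIn.mem_right hy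
  · rw [connSet_iff]
    have heQ : ReachIn G A e e := reachIn_refl (hEA he)
    refine ⟨⟨e, heQ⟩, ?_⟩
    have key : ∀ x ∈ {y | ReachIn G A e y}, ReachIn G {y | ReachIn G A e y} e x := by
      intro x hx
      obtain ⟨w, hw⟩ := hx
      refine ⟨w, fun z hz => ?_⟩
      classical
      exact ⟨w.takeUntil z hz, fun u hu => hw u (SimpleGraph.Walk.support_takeUntil_subset _ hz hu)⟩
    intro x hx y hy
    exact ((key x hx).symm).trans (key y hy)
  · intro R hQR hRA hRconn
    rw [connSet_iff] at hRconn
    refine Set.Subset.antisymm ?_ hQR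
    intro r hr
    have heR : e ∈ R := hQR (reachIn_refl (hEA he))
    exact (hRconn.2 e heR r hr).mono hRA
  · intro x hx
    rw [connSet_iff] at hconn
    exact (hconn.2 e he x hx).mono hEA

lemma comp_eq {Q Q' A : Set V} (hQ : IsCompOf G Q A) (hQ' : IsCompOf G Q' A)
    (hne : (Q ∩ Q').Nonempty) : Q = Q' := by
  have hconn : ConnSet G (Q ∪ Q') := connSet_union hQ.2.1 hQ'.2.1 hne
  have h1 : Q ∪ Q' = Q := hQ.2.2 _ Set.subset_union_left (Set.union_subset hQ.1 hQ'.1) hconn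
  have h2 : Q ∪ Q' = Q' := hQ'.2.2 _ Set.subset_union_right (Set.union_subset hQ.1 hQ'.1) hconn
  rw [← h1, h2]

lemma comp_bdry {Q A : Set V} (hQ : IsCompOf G Q A) : bdry G Q ⊆ bdry G A := by
  rintro v ⟨hvQ, u, huQ, hadj⟩
  by_cases hvA : v ∈ A
  · exfalso
    have hconn : ConnSet G (insert v Q) := connSet_insert hQ.2.1 huQ hadj
    have := hQ.2.2 (insert v Q) (Set.subset_insert _ _)
      (Set.insert_subset hvA hQ.1) hconn
    exact hvQ (this ▸ Set.mem_insert v Q)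
  · exact ⟨hvA, u, hQ.1 huQ, hadj⟩

lemma comp_restrict {Q A B : Set V} (hQ : IsCompOf G Q A) (hQB : Q ⊆ B) (hBA : B ⊆ A) :
    IsCompOf G Q B :=
  ⟨hQB, hQ.2.1, fun R h1 h2 h3 => hQ.2.2 R h1 (h2.trans hBA) h3⟩

lemma bdry_inter (X Y : Set V) :
    bdry G (X ∩ Y) ⊆ (bdry G X ∩ (Y ∪ bdry G Y)) ∪ (X ∩ bdry G Y) := by
  rintro v ⟨hv, u, ⟨huX, huY⟩, hadj⟩
  have hX : v ∈ X ∪ bdry G X := by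
    by_cases h : v ∈ X
    · exact Or.inl h
    · exact Or.inr ⟨h, u, huX, hadj⟩
  have hY : v ∈ Y ∪ bdry G Y := by
    by_cases h : v ∈ Y
    · exact Or.inl h
    · exact Or.inr ⟨h, u, huY, hadj⟩
  rcases hX with hX | hX
  · rcases hY with hY | hY
    · exact absurd ⟨hX, hY⟩ hv
    · exact Or.inr ⟨hX, hY⟩
  · exact Or.inl ⟨hX, hY⟩

/-- Counting a finite set through the trichotomy `X`, `bdry X`, `cstar X`. -/
lemma ncard_tri {S : Set V} (hS : S.Finite) (X : Set V) :
    S.ncard = (S ∩ X).ncard + (S ∩ bdry G X).ncard + (S ∩ cstar G X).ncard := by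
  have hdecomp : S = (S ∩ X) ∪ (S ∩ bdry G X) ∪ (S ∩ cstar G X) := by
    ext v
    constructor
    · intro hv
      rcases tri (C := X) v with h | h | h
      · exact Or.inl (Or.inl ⟨hv, h⟩)
      · exact Or.inl (Or.inr ⟨hv, h⟩)
      · exact Or.inr ⟨hv, h⟩
    · rintro ((⟨h, _⟩ | ⟨h, _⟩) | ⟨h, _⟩) <;> exact h
  have d1 : Disjoint (S ∩ X) (S ∩ bdry G X) := by
    rw [Set.disjoint_left]; rintro v ⟨_, hv1⟩ ⟨_, hv2⟩; exact hv2.1 hv1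
  have d2 : Disjoint ((S ∩ X) ∪ (S ∩ bdry G X)) (S ∩ cstar G X) := by
    rw [Set.disjoint_left]
    rintro v (⟨_, hv1⟩ | ⟨_, hv1⟩) ⟨_, hv2⟩
    · exact cstar_not_mem hv2 hv1
    · exact cstar_not_bdry hv2 hv1
  calc S.ncard = ((S ∩ X) ∪ (S ∩ bdry G X) ∪ (S ∩ cstar G X)).ncard := by rw [← hdecomp]
    _ = ((S ∩ X) ∪ (S ∩ bdry G X)).ncard + (S ∩ cstar G X).ncard := by
        rw [Set.ncard_union_eq d2 ((hS.inter_of_left _).union (hS.inter_of_left _))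
          (hS.inter_of_left _)]
    _ = _ := by
        rw [Set.ncard_union_eq d1 (hS.inter_of_left _) (hS.inter_of_left _)]

end Stmt11Aux

namespace Stmt11Aux
variable {G : SimpleGraph V} {𝒞 : Set (Set V)} {κ : ℕ}

lemma inter_cstar_self (G : SimpleGraph V) (D : Set V) : D ∩ cstar G D = ∅ :=
  Set.eq_empty_iff_forall_notMem.2 fun _ ⟨h1, h2⟩ => cstar_not_mem h2 h1

lemma cstar_has_cut (h : IsThinCutSystem G 𝒞 κ) {D : Set V} (hD : D ∈ 𝒞) :
    ∃ E ∈ 𝒞, E ⊆ cstar G D := by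
  obtain ⟨A, B, hopp, ⟨E1, hE1, h1⟩, ⟨E2, hE2, h2⟩⟩ := h.toIsCutSystem.a2 D hD D hD
  have hne1 := h.toIsCutSystem.nonempty E1 hE1
  have hne2 := h.toIsCutSystem.nonempty E2 hE2
  rcases hopp with ⟨hA, hB⟩ | ⟨hA, hB⟩ | ⟨hA, hB⟩ | ⟨hA, hB⟩
  · exact ⟨E2, hE2, by rw [hB, Set.inter_self] at h2; exact h2⟩
  · exact ⟨E1, hE1, by rw [hA, Set.inter_self] at h1; exact h1⟩
  · exfalso
    obtain ⟨x, hx⟩ := hne1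
    have := h1 hx
    rw [hA, inter_cstar_self] at this
    exact this
  · exfalso
    obtain ⟨x, hx⟩ := hne2
    have := h2 hx
    rw [hB, inter_cstar_self] at this
    exact this

lemma comp_cstar_cut (h : IsThinCutSystem G 𝒞 κ) {D Q E : Set V} (hD : D ∈ 𝒞)
    (hQ : IsCompOf G Q (cstar G D)) (hE : E ∈ 𝒞) (hEQ : E ⊆ Q) : Q ∈ 𝒞 := by
  refine h.toIsCutSystem.a1 D hD D hD (D ∩ D) (cstar G D ∩ cstar G D)
    (Or.inl ⟨rfl, rfl⟩) ⟨D, hD, by rw [Set.inter_self]⟩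
    ⟨E, hE, by rw [Set.inter_self]; exact hEQ.trans hQ.1⟩ Q
    (Or.inr (by rw [Set.inter_self]; exact hQ)) ⟨E, hE, hEQ⟩

lemma cutcomp_bdry (h : IsThinCutSystem G 𝒞 κ) {D Q : Set V} (hD : D ∈ 𝒞)
    (hQ : IsCompOf G Q (cstar G D)) (hQc : Q ∈ 𝒞) : bdry G Q = bdry G D := by
  have hsub : bdry G Q ⊆ bdry G D := (comp_bdry hQ).trans (bdry_cstar_subset G D)
  refine Set.eq_of_subset_of_ncard_le hsub ?_ (h.toIsCutSystem.finBd D hD)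
  rw [h.thin Q hQc, h.thin D hD]

lemma exists_cutcomp (h : IsThinCutSystem G 𝒞 κ) {D : Set V} (hD : D ∈ 𝒞) :
    ∃ Q : Set V, IsCompOf G Q (cstar G D) ∧ Q ∈ 𝒞 := by
  obtain ⟨E, hE, hEsub⟩ := cstar_has_cut h hD
  obtain ⟨Q, hQ, hEQ⟩ := comp_exists (h.toIsCutSystem.nonempty E hE)
    (h.toIsCutSystem.conn E hE) hEsub
  exact ⟨Q, hQ, comp_cstar_cut h hD hQ hE hEQ⟩

lemma ncard_pair_le {A B S : Set V} (hS : S.Finite) (hA : A ⊆ S) (hB : B ⊆ S)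
    (hd : Disjoint A B) : A.ncard + B.ncard ≤ S.ncard := by
  rw [← Set.ncard_union_eq hd (hS.subset hA) (hS.subset hB)]
  exact Set.ncard_le_ncard (Set.union_subset hA hB) hS

lemma ncard_triple_le {A B C S : Set V} (hS : S.Finite) (hA : A ⊆ S) (hB : B ⊆ S)
    (hC : C ⊆ S) (hAB : Disjoint A B) (hAC : Disjoint A C) (hBC : Disjoint B C) :
    A.ncard + B.ncard + C.ncard ≤ S.ncard := by
  have h1 : (A ∪ B).ncard = A.ncard + B.ncard :=
    Set.ncard_union_eq hAB (hS.subset hA) (hS.subset hB)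
  rw [← h1]
  exact ncard_pair_le hS (Set.union_subset hA hB) hC (Set.disjoint_union_left.2 ⟨hAC, hBC⟩)

/-- Key counting lemma: crossing cuts with cuts in the corner pair `X∩D`, `X*∩D*`. -/
lemma lemmaE (h : IsThinCutSystem G 𝒞 κ) {X D F1 F2 : Set V}
    (hX : X ∈ 𝒞) (hD : D ∈ 𝒞) (hF1 : F1 ∈ 𝒞) (hF1A : F1 ⊆ X ∩ D)
    (hF2 : F2 ∈ 𝒞) (hF2B : F2 ⊆ cstar G X ∩ cstar G D) :
    (bdry G D ∩ X).ncard = (bdry G X ∩ cstar G D).ncard ∧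
    (bdry G D ∩ cstar G X).ncard = (bdry G X ∩ D).ncard := by
  have hNfin : (bdry G X).Finite := h.toIsCutSystem.finBd X hX
  have hMfin : (bdry G D).Finite := h.toIsCutSystem.finBd D hD
  obtain ⟨QA, hQA, hF1QA⟩ := comp_exists (h.toIsCutSystem.nonempty F1 hF1)
    (h.toIsCutSystem.conn F1 hF1) hF1A
  obtain ⟨QB, hQB, hF2QB⟩ := comp_exists (h.toIsCutSystem.nonempty F2 hF2)
    (h.toIsCutSystem.conn F2 hF2) hF2B
  have hQAc : QA ∈ 𝒞 := h.toIsCutSystem.a1 X hX D hD (X ∩ D) (cstar G X ∩ cstar G D)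
    (Or.inl ⟨rfl, rfl⟩) ⟨F1, hF1, hF1A⟩ ⟨F2, hF2, hF2B⟩ QA (Or.inl hQA) ⟨F1, hF1, hF1QA⟩
  have hQBc : QB ∈ 𝒞 := h.toIsCutSystem.a1 X hX D hD (X ∩ D) (cstar G X ∩ cstar G D)
    (Or.inl ⟨rfl, rfl⟩) ⟨F1, hF1, hF1A⟩ ⟨F2, hF2, hF2B⟩ QB (Or.inr hQB) ⟨F2, hF2, hF2QB⟩
  have hTA : bdry G QA ⊆ ((bdry G X ∩ D) ∪ (bdry G X ∩ bdry G D)) ∪ (X ∩ bdry G D) := by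
    intro v hv
    rcases bdry_inter X D (comp_bdry hQA hv) with ⟨hN, (hD' | hM)⟩ | hXM
    · exact Or.inl (Or.inl ⟨hN, hD'⟩)
    · exact Or.inl (Or.inr ⟨hN, hM⟩)
    · exact Or.inr hXM
  have hTB : bdry G QB ⊆ ((bdry G X ∩ cstar G D) ∪ (bdry G X ∩ bdry G D)) ∪
      (cstar G X ∩ bdry G D) := by
    intro v hv
    rcases bdry_inter (cstar G X) (cstar G D) (comp_bdry hQB hv) with ⟨hN, (hD' | hM)⟩ | hXM
    · exact Or.inl (Or.inl ⟨bdry_cstar_subset G X hN, hD'⟩)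
    · exact Or.inl (Or.inr ⟨bdry_cstar_subset G X hN, bdry_cstar_subset G D hM⟩)
    · exact Or.inr ⟨hXM.1, bdry_cstar_subset G D hXM.2⟩
  have hfinTA : (((bdry G X ∩ D) ∪ (bdry G X ∩ bdry G D)) ∪ (X ∩ bdry G D)).Finite :=
    ((hNfin.inter_of_left _).union (hNfin.inter_of_left _)).union (hMfin.inter_of_right _)
  have hfinTB : (((bdry G X ∩ cstar G D) ∪ (bdry G X ∩ bdry G D)) ∪
      (cstar G X ∩ bdry G D)).Finite :=
    ((hNfin.inter_of_left _).union (hNfin.inter_of_left _)).union (hMfin.inter_of_right _)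
  have hκA : κ ≤ (bdry G X ∩ D).ncard + (bdry G X ∩ bdry G D).ncard + (X ∩ bdry G D).ncard := by
    calc κ = (bdry G QA).ncard := (h.thin QA hQAc).symm
      _ ≤ _ := Set.ncard_le_ncard hTA hfinTA
      _ ≤ _ := le_trans (Set.ncard_union_le _ _)
          (Nat.add_le_add_right (Set.ncard_union_le _ _) _)
  have hκB : κ ≤ (bdry G X ∩ cstar G D).ncard + (bdry G X ∩ bdry G D).ncard +
      (cstar G X ∩ bdry G D).ncard := by
    calc κ = (bdry G QB).ncard := (h.thin QB hQBc).symm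
      _ ≤ _ := Set.ncard_le_ncard hTB hfinTB
      _ ≤ _ := le_trans (Set.ncard_union_le _ _)
          (Nat.add_le_add_right (Set.ncard_union_le _ _) _)
  have hNpart : κ = (bdry G X ∩ D).ncard + (bdry G X ∩ bdry G D).ncard +
      (bdry G X ∩ cstar G D).ncard := by
    rw [← h.thin X hX]; exact ncard_tri hNfin D
  have hMpart : κ = (bdry G D ∩ X).ncard + (bdry G D ∩ bdry G X).ncard +
      (bdry G D ∩ cstar G X).ncard := by
    rw [← h.thin D hD]; exact ncard_tri hMfin X
  have e1 : (X ∩ bdry G D).ncard = (bdry G D ∩ X).ncard := by rw [Set.inter_comm]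
  have e2 : (cstar G X ∩ bdry G D).ncard = (bdry G D ∩ cstar G X).ncard := by
    rw [Set.inter_comm]
  have e3 : (bdry G D ∩ bdry G X).ncard = (bdry G X ∩ bdry G D).ncard := by
    rw [Set.inter_comm]
  rw [e1] at hκA
  rw [e2] at hκB
  rw [e3] at hMpart
  omega

/-- Key counting lemma: crossing cuts with cuts in the corner pair `X∩D*`, `X*∩D`. -/
lemma lemmaE' (h : IsThinCutSystem G 𝒞 κ) {X D F1 F2 : Set V}
    (hX : X ∈ 𝒞) (hD : D ∈ 𝒞) (hF1 : F1 ∈ 𝒞) (hF1A : F1 ⊆ X ∩ cstar G D)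
    (hF2 : F2 ∈ 𝒞) (hF2B : F2 ⊆ cstar G X ∩ D) :
    (bdry G D ∩ X).ncard = (bdry G X ∩ D).ncard ∧
    (bdry G D ∩ cstar G X).ncard = (bdry G X ∩ cstar G D).ncard := by
  have hNfin : (bdry G X).Finite := h.toIsCutSystem.finBd X hX
  have hMfin : (bdry G D).Finite := h.toIsCutSystem.finBd D hD
  obtain ⟨QA, hQA, hF1QA⟩ := comp_exists (h.toIsCutSystem.nonempty F1 hF1)
    (h.toIsCutSystem.conn F1 hF1) hF1A
  obtain ⟨QB, hQB, hF2QB⟩ := comp_exists (h.toIsCutSystem.nonempty F2 hF2)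
    (h.toIsCutSystem.conn F2 hF2) hF2B
  have hQAc : QA ∈ 𝒞 := h.toIsCutSystem.a1 X hX D hD (X ∩ cstar G D) (cstar G X ∩ D)
    (Or.inr (Or.inr (Or.inl ⟨rfl, rfl⟩))) ⟨F1, hF1, hF1A⟩ ⟨F2, hF2, hF2B⟩ QA
    (Or.inl hQA) ⟨F1, hF1, hF1QA⟩
  have hQBc : QB ∈ 𝒞 := h.toIsCutSystem.a1 X hX D hD (X ∩ cstar G D) (cstar G X ∩ D)
    (Or.inr (Or.inr (Or.inl ⟨rfl, rfl⟩))) ⟨F1, hF1, hF1A⟩ ⟨F2, hF2, hF2B⟩ QB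
    (Or.inr hQB) ⟨F2, hF2, hF2QB⟩
  have hTA : bdry G QA ⊆ ((bdry G X ∩ cstar G D) ∪ (bdry G X ∩ bdry G D)) ∪
      (X ∩ bdry G D) := by
    intro v hv
    rcases bdry_inter X (cstar G D) (comp_bdry hQA hv) with ⟨hN, (hD' | hM)⟩ | hXM
    · exact Or.inl (Or.inl ⟨hN, hD'⟩)
    · exact Or.inl (Or.inr ⟨hN, bdry_cstar_subset G D hM⟩)
    · exact Or.inr ⟨hXM.1, bdry_cstar_subset G D hXM.2⟩
  have hTB : bdry G QB ⊆ ((bdry G X ∩ D) ∪ (bdry G X ∩ bdry G D)) ∪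
      (cstar G X ∩ bdry G D) := by
    intro v hv
    rcases bdry_inter (cstar G X) D (comp_bdry hQB hv) with ⟨hN, (hD' | hM)⟩ | hXM
    · exact Or.inl (Or.inl ⟨bdry_cstar_subset G X hN, hD'⟩)
    · exact Or.inl (Or.inr ⟨bdry_cstar_subset G X hN, hM⟩)
    · exact Or.inr hXM
  have hfinTA : (((bdry G X ∩ cstar G D) ∪ (bdry G X ∩ bdry G D)) ∪ (X ∩ bdry G D)).Finite :=
    ((hNfin.inter_of_left _).union (hNfin.inter_of_left _)).union (hMfin.inter_of_right _)
  have hfinTB : (((bdry G X ∩ D) ∪ (bdry G X ∩ bdry G D)) ∪ (cstar G X ∩ bdry G D)).Finite :=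
    ((hNfin.inter_of_left _).union (hNfin.inter_of_left _)).union (hMfin.inter_of_right _)
  have hκA : κ ≤ (bdry G X ∩ cstar G D).ncard + (bdry G X ∩ bdry G D).ncard +
      (X ∩ bdry G D).ncard := by
    calc κ = (bdry G QA).ncard := (h.thin QA hQAc).symm
      _ ≤ _ := Set.ncard_le_ncard hTA hfinTA
      _ ≤ _ := le_trans (Set.ncard_union_le _ _)
          (Nat.add_le_add_right (Set.ncard_union_le _ _) _)
  have hκB : κ ≤ (bdry G X ∩ D).ncard + (bdry G X ∩ bdry G D).ncard +
      (cstar G X ∩ bdry G D).ncard := by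
    calc κ = (bdry G QB).ncard := (h.thin QB hQBc).symm
      _ ≤ _ := Set.ncard_le_ncard hTB hfinTB
      _ ≤ _ := le_trans (Set.ncard_union_le _ _)
          (Nat.add_le_add_right (Set.ncard_union_le _ _) _)
  have hNpart : κ = (bdry G X ∩ D).ncard + (bdry G X ∩ bdry G D).ncard +
      (bdry G X ∩ cstar G D).ncard := by
    rw [← h.thin X hX]; exact ncard_tri hNfin D
  have hMpart : κ = (bdry G D ∩ X).ncard + (bdry G D ∩ bdry G X).ncard +
      (bdry G D ∩ cstar G X).ncard := by
    rw [← h.thin D hD]; exact ncard_tri hMfin X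
  have e1 : (X ∩ bdry G D).ncard = (bdry G D ∩ X).ncard := by rw [Set.inter_comm]
  have e2 : (cstar G X ∩ bdry G D).ncard = (bdry G D ∩ cstar G X).ncard := by
    rw [Set.inter_comm]
  have e3 : (bdry G D ∩ bdry G X).ncard = (bdry G X ∩ bdry G D).ncard := by
    rw [Set.inter_comm]
  rw [e1] at hκA
  rw [e2] at hκB
  rw [e3] at hMpart
  omega

end Stmt11Aux

namespace Stmt11Aux
variable {G : SimpleGraph V} {𝒞 : Set (Set V)} {κ : ℕ}

lemma a2_cases (h : IsThinCutSystem G 𝒞 κ) {X D : Set V} (hX : X ∈ 𝒞) (hD : D ∈ 𝒞) :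
    ((∃ F ∈ 𝒞, F ⊆ X ∩ D) ∧ (∃ F ∈ 𝒞, F ⊆ cstar G X ∩ cstar G D)) ∨
    ((∃ F ∈ 𝒞, F ⊆ X ∩ cstar G D) ∧ (∃ F ∈ 𝒞, F ⊆ cstar G X ∩ D)) := by
  obtain ⟨A, B, hopp, hcA, hcB⟩ := h.toIsCutSystem.a2 X hX D hD
  rcases hopp with ⟨rfl, rfl⟩ | ⟨rfl, rfl⟩ | ⟨rfl, rfl⟩ | ⟨rfl, rfl⟩
  · exact Or.inl ⟨hcA, hcB⟩
  · exact Or.inl ⟨hcB, hcA⟩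
  · exact Or.inr ⟨hcA, hcB⟩
  · exact Or.inr ⟨hcB, hcA⟩

lemma comp_sub_cstar (h : IsThinCutSystem G 𝒞 κ) {C Q Y : Set V} (hC : C ∈ 𝒞)
    (hQ : IsCompOf G Q (cstar G C)) (hY : IsCompOf G Y (cstar G C)) (hYc : Y ∈ 𝒞)
    (hne : Q ≠ Y) : Q ⊆ cstar G Y := by
  have hbY : bdry G Y = bdry G C := cutcomp_bdry h hC hY hYc
  intro q hq
  refine mem_cstar.2 ⟨fun hqY => hne (comp_eq hQ hY ⟨q, hq, hqY⟩), fun hqb => ?_⟩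
  rw [hbY] at hqb
  exact cstar_not_bdry (hQ.1 hq) hqb

lemma crunch (h : IsThinCutSystem G 𝒞 κ) {C D Q1 Q2 : Set V}
    (hC : C ∈ 𝒞) (hD : D ∈ 𝒞)
    (hQ1 : IsCompOf G Q1 (cstar G C)) (hQ1c : Q1 ∈ 𝒞)
    (hQ2 : IsCompOf G Q2 (cstar G C)) (hQ2c : Q2 ∈ 𝒞)
    (hQne : Q1 ≠ Q2)
    (hn0 : (bdry G C ∩ D).Nonempty) (hm0 : (bdry G D ∩ C).Nonempty)
    (hm1 : (bdry G D ∩ Q1).Nonempty) (hm2 : (bdry G D ∩ Q2).Nonempty) : False := by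
  have hNfin : (bdry G C).Finite := h.toIsCutSystem.finBd C hC
  have hMfin : (bdry G D).Finite := h.toIsCutSystem.finBd D hD
  have hb1 : bdry G Q1 = bdry G C := cutcomp_bdry h hC hQ1 hQ1c
  have hb2 : bdry G Q2 = bdry G C := cutcomp_bdry h hC hQ2 hQ2c
  have hNpart : κ = (bdry G C ∩ D).ncard + (bdry G C ∩ bdry G D).ncard +
      (bdry G C ∩ cstar G D).ncard := by
    rw [← h.thin C hC]; exact ncard_tri hNfin D
  have hMpart : κ = (bdry G D ∩ C).ncard + (bdry G D ∩ bdry G C).ncard +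
      (bdry G D ∩ cstar G C).ncard := by
    rw [← h.thin D hD]; exact ncard_tri hMfin C
  have hbb : (bdry G D ∩ bdry G C).ncard = (bdry G C ∩ bdry G D).ncard := by
    rw [Set.inter_comm]
  have ha : 0 < (bdry G C ∩ D).ncard :=
    (Set.ncard_pos (hNfin.inter_of_left _)).2 hn0
  have hp0 : 0 < (bdry G D ∩ C).ncard :=
    (Set.ncard_pos (hMfin.inter_of_left _)).2 hm0
  have hp1 : 0 < (bdry G D ∩ Q1).ncard :=
    (Set.ncard_pos (hMfin.inter_of_left _)).2 hm1
  have hp2 : 0 < (bdry G D ∩ Q2).ncard :=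
    (Set.ncard_pos (hMfin.inter_of_left _)).2 hm2
  have hd12 : Disjoint Q1 Q2 :=
    Set.disjoint_left.2 fun v hv1 hv2 => hQne (comp_eq hQ1 hQ2 ⟨v, hv1, hv2⟩)
  have hsub1 : bdry G D ∩ Q1 ⊆ bdry G D ∩ cstar G C :=
    fun v hv => ⟨hv.1, hQ1.1 hv.2⟩
  have hsub2 : bdry G D ∩ Q2 ⊆ bdry G D ∩ cstar G C :=
    fun v hv => ⟨hv.1, hQ2.1 hv.2⟩
  have hpair : (bdry G D ∩ Q1).ncard + (bdry G D ∩ Q2).ncard ≤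
      (bdry G D ∩ cstar G C).ncard :=
    ncard_pair_le (hMfin.inter_of_left _) hsub1 hsub2
      (Disjoint.mono Set.inter_subset_right Set.inter_subset_right hd12)
  -- dichotomy data for C, Q1, Q2
  have dC : ((bdry G D ∩ C).ncard = (bdry G C ∩ cstar G D).ncard ∧
        (∃ F ∈ 𝒞, F ⊆ cstar G C ∩ cstar G D)) ∨
      ((bdry G D ∩ C).ncard = (bdry G C ∩ D).ncard ∧
        (∃ F ∈ 𝒞, F ⊆ cstar G C ∩ D)) := by
    rcases a2_cases h hC hD with ⟨⟨F1, hF1, hF1s⟩, ⟨F2, hF2, hF2s⟩⟩ |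
        ⟨⟨F1, hF1, hF1s⟩, ⟨F2, hF2, hF2s⟩⟩
    · exact Or.inl ⟨(lemmaE h hC hD hF1 hF1s hF2 hF2s).1, ⟨F2, hF2, hF2s⟩⟩
    · exact Or.inr ⟨(lemmaE' h hC hD hF1 hF1s hF2 hF2s).1, ⟨F2, hF2, hF2s⟩⟩
  have dQ : ∀ Q : Set V, Q ∈ 𝒞 → IsCompOf G Q (cstar G C) → bdry G Q = bdry G C →
      ((bdry G D ∩ Q).ncard = (bdry G C ∩ cstar G D).ncard ∧ (∃ F ∈ 𝒞, F ⊆ Q ∩ D)) ∨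
      ((bdry G D ∩ Q).ncard = (bdry G C ∩ D).ncard ∧ (∃ F ∈ 𝒞, F ⊆ Q ∩ cstar G D)) := by
    intro Q hQc hQcomp hbQ
    rcases a2_cases h hQc hD with ⟨⟨F1, hF1, hF1s⟩, ⟨F2, hF2, hF2s⟩⟩ |
        ⟨⟨F1, hF1, hF1s⟩, ⟨F2, hF2, hF2s⟩⟩
    · have := (lemmaE h hQc hD hF1 hF1s hF2 hF2s).1
      rw [hbQ] at this
      exact Or.inl ⟨this, ⟨F1, hF1, hF1s⟩⟩
    · have := (lemmaE' h hQc hD hF1 hF1s hF2 hF2s).1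
      rw [hbQ] at this
      exact Or.inr ⟨this, ⟨F1, hF1, hF1s⟩⟩
  have dQ1 := dQ Q1 hQ1c hQ1 hb1
  have dQ2 := dQ Q2 hQ2c hQ2 hb2
  rcases dC with ⟨eqC, E2, hE2, hE2s⟩ | ⟨eqC, E2, hE2, hE2s⟩
  · -- C of type 1 : E2 ⊆ C* ∩ D*
    rcases dQ1 with ⟨eq1, F1, hF1, hF1s⟩ | ⟨eq1, _⟩
    · rcases dQ2 with ⟨eq2, F2, hF2, hF2s⟩ | ⟨eq2, _⟩
      · -- all type 1 : Y-argument
        have hE2C : E2 ⊆ cstar G C := fun x hx => (hE2s hx).1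
        obtain ⟨Y, hY, hE2Y⟩ := comp_exists (h.toIsCutSystem.nonempty E2 hE2)
          (h.toIsCutSystem.conn E2 hE2) hE2C
        have hYc : Y ∈ 𝒞 := comp_cstar_cut h hC hY hE2 hE2Y
        have hbY : bdry G Y = bdry G C := cutcomp_bdry h hC hY hYc
        have hE2sub : E2 ⊆ Y ∩ cstar G D := fun x hx => ⟨hE2Y hx, (hE2s hx).2⟩
        by_cases hYQ1 : Y = Q1
        · have hQ2Y : Q2 ⊆ cstar G Y :=
            comp_sub_cstar h hC hQ2 hY hYc (fun he => hQne (he.trans hYQ1).symm)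
          have hFsub : F2 ⊆ cstar G Y ∩ D := fun x hx => ⟨hQ2Y (hF2s hx).1, (hF2s hx).2⟩
          have eqY := (lemmaE' h hYc hD hE2 hE2sub hF2 hFsub).1
          rw [hbY, hYQ1] at eqY
          omega
        · have hQ1Y : Q1 ⊆ cstar G Y :=
            comp_sub_cstar h hC hQ1 hY hYc (fun he => hYQ1 he.symm)
          have hFsub : F1 ⊆ cstar G Y ∩ D := fun x hx => ⟨hQ1Y (hF1s hx).1, (hF1s hx).2⟩
          have eqY := (lemmaE' h hYc hD hE2 hE2sub hF1 hFsub).1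
          rw [hbY] at eqY
          by_cases hYQ2 : Y = Q2
          · rw [hYQ2] at eqY
            omega
          · have hdY1 : Disjoint (bdry G D ∩ Q1) (bdry G D ∩ Y) :=
              Disjoint.mono Set.inter_subset_right Set.inter_subset_right
                (Set.disjoint_left.2 fun v hv1 hv2 => hYQ1 (comp_eq hY hQ1 ⟨v, hv2, hv1⟩))
            have hdY2 : Disjoint (bdry G D ∩ Q2) (bdry G D ∩ Y) :=
              Disjoint.mono Set.inter_subset_right Set.inter_subset_right
                (Set.disjoint_left.2 fun v hv1 hv2 => hYQ2 (comp_eq hY hQ2 ⟨v, hv2, hv1⟩))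
            have hsubY : bdry G D ∩ Y ⊆ bdry G D ∩ cstar G C :=
              fun v hv => ⟨hv.1, hY.1 hv.2⟩
            have htriple : (bdry G D ∩ Q1).ncard + (bdry G D ∩ Q2).ncard +
                (bdry G D ∩ Y).ncard ≤ (bdry G D ∩ cstar G C).ncard :=
              ncard_triple_le (hMfin.inter_of_left _) hsub1 hsub2 hsubY
                (Disjoint.mono Set.inter_subset_right Set.inter_subset_right hd12) hdY1 hdY2
            omega
      · omega
    · rcases dQ2 with ⟨eq2, _⟩ | ⟨eq2, _⟩ <;> omega
  · -- C of type 2 : E2 ⊆ C* ∩ D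
    rcases dQ1 with ⟨eq1, _⟩ | ⟨eq1, F1, hF1, hF1s⟩
    · rcases dQ2 with ⟨eq2, _⟩ | ⟨eq2, _⟩ <;> omega
    · rcases dQ2 with ⟨eq2, _⟩ | ⟨eq2, F2, hF2, hF2s⟩
      · omega
      · -- all type 2 : Y-argument
        have hE2C : E2 ⊆ cstar G C := fun x hx => (hE2s hx).1
        obtain ⟨Y, hY, hE2Y⟩ := comp_exists (h.toIsCutSystem.nonempty E2 hE2)
          (h.toIsCutSystem.conn E2 hE2) hE2C
        have hYc : Y ∈ 𝒞 := comp_cstar_cut h hC hY hE2 hE2Y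
        have hbY : bdry G Y = bdry G C := cutcomp_bdry h hC hY hYc
        have hE2sub : E2 ⊆ Y ∩ D := fun x hx => ⟨hE2Y hx, (hE2s hx).2⟩
        by_cases hYQ1 : Y = Q1
        · have hQ2Y : Q2 ⊆ cstar G Y :=
            comp_sub_cstar h hC hQ2 hY hYc (fun he => hQne (he.trans hYQ1).symm)
          have hFsub : F2 ⊆ cstar G Y ∩ cstar G D :=
            fun x hx => ⟨hQ2Y (hF2s hx).1, (hF2s hx).2⟩
          have eqY := (lemmaE h hYc hD hE2 hE2sub hF2 hFsub).1
          rw [hbY, hYQ1] at eqY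
          omega
        · have hQ1Y : Q1 ⊆ cstar G Y :=
            comp_sub_cstar h hC hQ1 hY hYc (fun he => hYQ1 he.symm)
          have hFsub : F1 ⊆ cstar G Y ∩ cstar G D :=
            fun x hx => ⟨hQ1Y (hF1s hx).1, (hF1s hx).2⟩
          have eqY := (lemmaE h hYc hD hE2 hE2sub hF1 hFsub).1
          rw [hbY] at eqY
          by_cases hYQ2 : Y = Q2
          · rw [hYQ2] at eqY
            omega
          · have hdY1 : Disjoint (bdry G D ∩ Q1) (bdry G D ∩ Y) :=
              Disjoint.mono Set.inter_subset_right Set.inter_subset_right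
                (Set.disjoint_left.2 fun v hv1 hv2 => hYQ1 (comp_eq hY hQ1 ⟨v, hv2, hv1⟩))
            have hdY2 : Disjoint (bdry G D ∩ Q2) (bdry G D ∩ Y) :=
              Disjoint.mono Set.inter_subset_right Set.inter_subset_right
                (Set.disjoint_left.2 fun v hv1 hv2 => hYQ2 (comp_eq hY hQ2 ⟨v, hv2, hv1⟩))
            have hsubY : bdry G D ∩ Y ⊆ bdry G D ∩ cstar G C :=
              fun v hv => ⟨hv.1, hY.1 hv.2⟩
            have htriple : (bdry G D ∩ Q1).ncard + (bdry G D ∩ Q2).ncard +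
                (bdry G D ∩ Y).ncard ≤ (bdry G D ∩ cstar G C).ncard :=
              ncard_triple_le (hMfin.inter_of_left _) hsub1 hsub2 hsubY
                (Disjoint.mono Set.inter_subset_right Set.inter_subset_right hd12) hdY1 hdY2
            omega

end Stmt11Aux

namespace Stmt11Aux
variable {G : SimpleGraph V} {𝒞 : Set (Set V)} {κ : ℕ}

/-- A cut component of `C*` cannot lie inside `D*` when `D` meets `bdry C`. -/
lemma cutcomp_not_in_cstarD (h : IsThinCutSystem G 𝒞 κ) {C D S : Set V}
    (hC : C ∈ 𝒞) (hD : D ∈ 𝒞) (hS : IsCompOf G S (cstar G C)) (hSc : S ∈ 𝒞)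
    (hSD : S ⊆ cstar G D) (hn0 : (bdry G C ∩ D).Nonempty) : False := by
  have hbS : bdry G S = bdry G C := cutcomp_bdry h hC hS hSc
  have hcomp : IsCompOf G S (cstar G C ∩ cstar G D) :=
    comp_restrict hS (fun x hx => ⟨hS.1 hx, hSD hx⟩) Set.inter_subset_left
  obtain ⟨n0, hn0C, hn0D⟩ := hn0
  have hmem : n0 ∈ bdry G S := hbS ▸ hn0C
  rcases bdry_inter (cstar G C) (cstar G D) (comp_bdry hcomp hmem) with ⟨_, hd | hm⟩ | hxm
  · exact cstar_not_mem hd hn0D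
  · exact (bdry_cstar_subset G D hm).1 hn0D
  · exact (bdry_cstar_subset G D hxm.2).1 hn0D

/-- If a cut component of `C*` lies inside `D`, then `bdry C` avoids `D*`. -/
lemma cutcomp_in_D_bound (h : IsThinCutSystem G 𝒞 κ) {C D S : Set V}
    (hC : C ∈ 𝒞) (hD : D ∈ 𝒞) (hS : IsCompOf G S (cstar G C)) (hSc : S ∈ 𝒞)
    (hSD : S ⊆ D) : bdry G C ∩ cstar G D = ∅ := by
  have hbS : bdry G S = bdry G C := cutcomp_bdry h hC hS hSc
  have hcomp : IsCompOf G S (cstar G C ∩ D) :=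
    comp_restrict hS (fun x hx => ⟨hS.1 hx, hSD hx⟩) Set.inter_subset_left
  apply Set.eq_empty_iff_forall_notMem.2
  rintro n ⟨hnC, hnD⟩
  have hmem : n ∈ bdry G S := hbS ▸ hnC
  rcases bdry_inter (cstar G C) D (comp_bdry hcomp hmem) with ⟨_, hd | hm⟩ | hxm
  · exact cstar_not_mem hnD hd
  · exact cstar_not_bdry hnD hm
  · exact cstar_not_bdry hnD hxm.2

/-- The hard case: `D` meets `bdry C` and `bdry D` meets `C`, while `C*` has two distinct
cut components. Then the corner `C* ∩ D*` is isolated. -/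
lemma hard_case (h : IsThinCutSystem G 𝒞 κ) {C D Q1 Q2 : Set V}
    (hC : C ∈ 𝒞) (hD : D ∈ 𝒞)
    (hQ1 : IsCompOf G Q1 (cstar G C)) (hQ1c : Q1 ∈ 𝒞)
    (hQ2 : IsCompOf G Q2 (cstar G C)) (hQ2c : Q2 ∈ 𝒞) (hQne : Q1 ≠ Q2)
    (hn0 : (bdry G C ∩ D).Nonempty) (hm0 : (bdry G D ∩ C).Nonempty) :
    Nested G 𝒞 C D := by
  -- some cut component of C* avoids bdry D
  have hSex : ∃ S : Set V, IsCompOf G S (cstar G C) ∧ S ∈ 𝒞 ∧ S ∩ bdry G D = ∅ := by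
    by_cases h1 : (bdry G D ∩ Q1).Nonempty
    · by_cases h2 : (bdry G D ∩ Q2).Nonempty
      · exact (crunch h hC hD hQ1 hQ1c hQ2 hQ2c hQne hn0 hm0 h1 h2).elim
      · refine ⟨Q2, hQ2, hQ2c, ?_⟩
        rw [Set.inter_comm]
        exact Set.not_nonempty_iff_eq_empty.1 h2
    · refine ⟨Q1, hQ1, hQ1c, ?_⟩
      rw [Set.inter_comm]
      exact Set.not_nonempty_iff_eq_empty.1 h1
  obtain ⟨S, hS, hSc, hSM⟩ := hSex
  have hSD : S ⊆ D := by
    rcases conn_subset_or (h.toIsCutSystem.conn S hSc) hSM with hsub | hsub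
    · exact hsub
    · exact (cutcomp_not_in_cstarD h hC hD hS hSc hsub hn0).elim
  have hND : bdry G C ∩ cstar G D = ∅ := cutcomp_in_D_bound h hC hD hS hSc hSD
  obtain ⟨R0, hR0, hR0c⟩ := exists_cutcomp h hD
  have hbR0 : bdry G R0 = bdry G D := cutcomp_bdry h hD hR0 hR0c
  have hR0N : R0 ∩ bdry G C = ∅ := by
    apply Set.eq_empty_iff_forall_notMem.2
    rintro v ⟨hv1, hv2⟩
    exact Set.eq_empty_iff_forall_notMem.1 hND v ⟨hv2, hR0.1 hv1⟩
  have hMC : bdry G D ∩ cstar G C = ∅ := by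
    rcases conn_subset_or (h.toIsCutSystem.conn R0 hR0c) hR0N with hsub | hsub
    · have hcomp : IsCompOf G R0 (cstar G D ∩ C) :=
        comp_restrict hR0 (fun x hx => ⟨hR0.1 hx, hsub hx⟩) Set.inter_subset_left
      apply Set.eq_empty_iff_forall_notMem.2
      rintro m ⟨hmM, hmCs⟩
      have hmem : m ∈ bdry G R0 := hbR0 ▸ hmM
      rcases bdry_inter (cstar G D) C (comp_bdry hcomp hmem) with ⟨_, hc | hb⟩ | hxm
      · exact cstar_not_mem hmCs hc
      · exact cstar_not_bdry hmCs hb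
      · exact cstar_not_bdry hmCs hxm.2
    · exfalso
      have hcomp : IsCompOf G R0 (cstar G D ∩ cstar G C) :=
        comp_restrict hR0 (fun x hx => ⟨hR0.1 hx, hsub hx⟩) Set.inter_subset_left
      obtain ⟨m0, hm0M, hm0C⟩ := hm0
      have hmem : m0 ∈ bdry G R0 := hbR0 ▸ hm0M
      rcases bdry_inter (cstar G D) (cstar G C) (comp_bdry hcomp hmem) with ⟨_, hc | hb⟩ | hxm
      · exact cstar_not_mem hc hm0C
      · exact (bdry_cstar_subset G C hb).1 hm0C
      · exact (bdry_cstar_subset G C hxm.2).1 hm0C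
  have hnocut : ¬ ∃ E ∈ 𝒞, E ⊆ cstar G C ∩ cstar G D := by
    rintro ⟨E, hE, hEs⟩
    obtain ⟨X, hX, hEX⟩ := comp_exists (h.toIsCutSystem.nonempty E hE)
      (h.toIsCutSystem.conn E hE) (fun x hx => (hEs hx).1)
    have hXc : X ∈ 𝒞 := comp_cstar_cut h hC hX hE hEX
    have hXM : X ∩ bdry G D = ∅ := by
      apply Set.eq_empty_iff_forall_notMem.2
      rintro v ⟨hv1, hv2⟩
      exact Set.eq_empty_iff_forall_notMem.1 hMC v ⟨hv2, hX.1 hv1⟩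
    rcases conn_subset_or (h.toIsCutSystem.conn X hXc) hXM with hsub | hsub
    · obtain ⟨e, he⟩ := h.toIsCutSystem.nonempty E hE
      exact cstar_not_mem (hEs he).2 (hsub (hEX he))
    · exact cutcomp_not_in_cstarD h hC hD hX hXc hsub hn0
  refine ⟨cstar G C ∩ cstar G D, hnocut, Or.inr (Or.inr (Or.inr ⟨rfl, ?_, ?_⟩))⟩
  · rw [Set.inter_comm]; exact hMC
  · rw [Set.inter_comm]; exact hND

theorem main_thm (h : IsThinCutSystem G 𝒞 κ) {C : Set V} (hC : C ∈ 𝒞) :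
    (∀ D ∈ 𝒞, D ≠ C → Nested G 𝒞 C D) ∨
    (∃! Q : Set V, Q ∈ 𝒞 ∧ IsCompOf G Q (cstar G C)) := by
  by_cases huniq : ∀ Q1 Q2 : Set V, (Q1 ∈ 𝒞 ∧ IsCompOf G Q1 (cstar G C)) →
      (Q2 ∈ 𝒞 ∧ IsCompOf G Q2 (cstar G C)) → Q1 = Q2
  · right
    obtain ⟨Q, hQcomp, hQc⟩ := exists_cutcomp h hC
    exact ⟨Q, ⟨hQc, hQcomp⟩, fun Q' hQ' => huniq Q' Q hQ' ⟨hQc, hQcomp⟩⟩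
  · left
    push_neg at huniq
    obtain ⟨Q1, Q2, h1, h2, hQne⟩ := huniq
    intro D hD _
    by_cases hDN : (D ∩ bdry G C).Nonempty
    · by_cases hCM : (C ∩ bdry G D).Nonempty
      · obtain ⟨n0, hn0D, hn0N⟩ := hDN
        obtain ⟨m0, hm0C, hm0M⟩ := hCM
        exact hard_case h hC hD h1.2 h1.1 h2.2 h2.1 hQne ⟨n0, hn0N, hn0D⟩ ⟨m0, hm0M, hm0C⟩
      · -- C avoids bdry D : C ⊆ D or C ⊆ D*
        have hCM' : C ∩ bdry G D = ∅ := Set.not_nonempty_iff_eq_empty.1 hCM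
        rcases conn_subset_or (h.toIsCutSystem.conn C hC) hCM' with hsub | hsub
        · -- C ⊆ D : corner C ∩ D*
          refine ⟨C ∩ cstar G D, ?_, Or.inr (Or.inl ⟨rfl, hCM', ?_⟩)⟩
          · rintro ⟨E, hE, hEs⟩
            obtain ⟨e, he⟩ := h.toIsCutSystem.nonempty E hE
            exact cstar_not_mem (hEs he).2 (hsub (hEs he).1)
          · apply Set.eq_empty_iff_forall_notMem.2
            rintro v ⟨hv1, hv2⟩
            obtain ⟨_, u, hu, hadj⟩ := hv2
            rcases adj_mem (hsub hu) hadj with hvD | hvB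
            · exact cstar_not_mem hv1 hvD
            · exact cstar_not_bdry hv1 hvB
        · -- C ⊆ D* : corner C ∩ D
          refine ⟨C ∩ D, ?_, Or.inl ⟨rfl, hCM', ?_⟩⟩
          · rintro ⟨E, hE, hEs⟩
            obtain ⟨e, he⟩ := h.toIsCutSystem.nonempty E hE
            exact cstar_not_mem (hsub (hEs he).1) (hEs he).2
          · apply Set.eq_empty_iff_forall_notMem.2
            rintro v ⟨hv1, hv2⟩
            obtain ⟨_, u, hu, hadj⟩ := hv2
            rcases adj_mem (hsub hu) hadj with hvD | hvB
            · exact cstar_not_mem hvD hv1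
            · exact (bdry_cstar_subset G D hvB).1 hv1
    · -- D avoids bdry C : D ⊆ C or D ⊆ C*
      have hDN' : D ∩ bdry G C = ∅ := Set.not_nonempty_iff_eq_empty.1 hDN
      rcases conn_subset_or (h.toIsCutSystem.conn D hD) hDN' with hsub | hsub
      · -- D ⊆ C : corner C* ∩ D
        refine ⟨cstar G C ∩ D, ?_, Or.inr (Or.inr (Or.inl ⟨rfl, ?_, hDN'⟩))⟩
        · rintro ⟨E, hE, hEs⟩
          obtain ⟨e, he⟩ := h.toIsCutSystem.nonempty E hE
          exact cstar_not_mem (hEs he).1 (hsub (hEs he).2)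
        · apply Set.eq_empty_iff_forall_notMem.2
          rintro v ⟨hv1, hv2⟩
          obtain ⟨_, u, hu, hadj⟩ := hv2
          rcases adj_mem (hsub hu) hadj with hvC | hvB
          · exact cstar_not_mem hv1 hvC
          · exact cstar_not_bdry hv1 hvB
      · -- D ⊆ C* : corner C ∩ D
        refine ⟨C ∩ D, ?_, Or.inl ⟨rfl, ?_, hDN'⟩⟩
        · rintro ⟨E, hE, hEs⟩
          obtain ⟨e, he⟩ := h.toIsCutSystem.nonempty E hE
          exact cstar_not_mem (hsub (hEs he).2) (hEs he).1
        · apply Set.eq_empty_iff_forall_notMem.2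
          rintro v ⟨hv1, hv2⟩
          obtain ⟨_, u, hu, hadj⟩ := hv2
          rcases adj_mem (hsub hu) hadj with hvC | hvB
          · exact cstar_not_mem hvC hv1
          · exact (bdry_cstar_subset G C hvB).1 hv1

end Stmt11Aux


theorem stmt11 (G : SimpleGraph V) (hG : G.Connected) (𝒞 : Set (Set V)) (κ : ℕ)
    (h : IsThinCutSystem G 𝒞 κ) (C : Set V) (hC : C ∈ 𝒞) :
    (∀ D ∈ 𝒞, D ≠ C → Nested G 𝒞 C D) ∨
    (∃! Q : Set V, Q ∈ 𝒞 ∧ IsCompOf G Q (cstar G C)) := by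
  exact Stmt11Aux.main_thm h hC
end

section
/- In any cut system, every component of an isolated corner of two cuts is a slice. -/
variable {V : Type*}

lemma walk_closed {G : SimpleGraph V} {R P : Set V}
    (hcl : ∀ u v : V, u ∈ P → v ∈ R → G.Adj u v → v ∈ P) :
    ∀ {a b : R}, (G.induce R).Walk a b → (a : V) ∈ P → (b : V) ∈ P := by
  intro a b w
  induction w with
  | nil => exact id
  | @cons u v _ h _ ih => exact fun ha => ih (hcl u v ha v.2 h)

lemma conn_subset {G : SimpleGraph V} {R P : Set V} (hR : ConnSet G R)
    (hcl : ∀ u v : V, u ∈ P → v ∈ R → G.Adj u v → v ∈ P)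
    {x : V} (hx : x ∈ R) (hxP : x ∈ P) : R ⊆ P := by
  intro y hy
  obtain ⟨w⟩ := hR.preconnected ⟨x, hx⟩ ⟨y, hy⟩
  exact walk_closed hcl w hxP

lemma conn_sub_of_mem {G : SimpleGraph V} {R X : Set V} (hR : ConnSet G R)
    (hdisj : R ⊆ (bdry G X)ᶜ) {x : V} (hx : x ∈ R) (hxX : x ∈ X) : R ⊆ X := by
  refine conn_subset hR ?_ hx hxX
  intro u v hu hv hadj
  by_contra hvX
  exact hdisj hv ⟨hvX, u, hu, hadj⟩

lemma conn_sub_of_cstar {G : SimpleGraph V} {R X : Set V} (hR : ConnSet G R)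
    (hdisj : R ⊆ (bdry G X)ᶜ) {x : V} (hx : x ∈ R) (hxX : x ∈ cstar G X) :
    R ⊆ cstar G X := by
  refine conn_subset hR ?_ hx hxX
  intro u v hu hv hadj
  intro hmem
  rcases hmem with hvX | hvb
  · exact hu (Or.inr ⟨fun huX => hu (Or.inl huX), v, hvX, hadj.symm⟩)
  · exact hdisj hv hvb

lemma slice_of {G : SimpleGraph V} {𝒞 : Set (Set V)} {C' A Q : Set V}
    (hC' : C' ∈ 𝒞) (hnocut : ¬ ∃ E ∈ 𝒞, E ⊆ A)
    (hAb : A ⊆ (bdry G C')ᶜ)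
    (habsorb : ∀ R : Set V, Q ⊆ R → R ⊆ (bdry G C')ᶜ → ConnSet G R → R ⊆ A)
    (hQ : IsCompOf G Q A) : IsSlice G 𝒞 Q := by
  constructor
  · exact ⟨C', hC', hQ.1.trans hAb, hQ.2.1,
      fun R hQR hRb hRc => hQ.2.2 R hQR (habsorb R hQR hRb hRc) hRc⟩
  · exact fun hQC => hnocut ⟨Q, hQC, hQ.1⟩

theorem stmt12 (G : SimpleGraph V) (hG : G.Connected) (𝒞 : Set (Set V))
    (h : IsCutSystem G 𝒞) (C D : Set V) (hC : C ∈ 𝒞) (hD : D ∈ 𝒞)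
    (A : Set V) (hA : IsolatedCorner G 𝒞 C D A)
    (Q : Set V) (hQ : IsCompOf G Q A) :
    IsSlice G 𝒞 Q := by
  obtain ⟨x, hxQ⟩ : Q.Nonempty := Set.nonempty_coe_sort.mp hQ.2.1.nonempty
  have hxA : x ∈ A := hQ.1 hxQ
  obtain ⟨hnocut, hcase⟩ := hA
  rcases hcase with ⟨hAeq, hL1, hL2⟩ | ⟨hAeq, hL1, hL2⟩ | ⟨hAeq, hL1, hL2⟩ | ⟨hAeq, hL1, hL2⟩
  · -- A = C ∩ D
    subst hAeq
    refine slice_of hC hnocut (fun v hv hb => hb.1 hv.1) ?_ hQ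
    intro R hQR hRb hRc
    have hRC : R ⊆ C := conn_sub_of_mem hRc hRb (hQR hxQ) hxA.1
    have hRbD : R ⊆ (bdry G D)ᶜ := fun v hv hb =>
      Set.eq_empty_iff_forall_notMem.mp hL1 v ⟨hRC hv, hb⟩
    have hRD : R ⊆ D := conn_sub_of_mem hRc hRbD (hQR hxQ) hxA.2
    exact fun v hv => ⟨hRC hv, hRD hv⟩
  · -- A = C ∩ cstar D
    subst hAeq
    refine slice_of hC hnocut (fun v hv hb => hb.1 hv.1) ?_ hQ
    intro R hQR hRb hRc
    have hRC : R ⊆ C := conn_sub_of_mem hRc hRb (hQR hxQ) hxA.1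
    have hRbD : R ⊆ (bdry G D)ᶜ := fun v hv hb =>
      Set.eq_empty_iff_forall_notMem.mp hL1 v ⟨hRC hv, hb⟩
    have hRD : R ⊆ cstar G D := conn_sub_of_cstar hRc hRbD (hQR hxQ) hxA.2
    exact fun v hv => ⟨hRC hv, hRD hv⟩
  · -- A = cstar C ∩ D
    subst hAeq
    refine slice_of hD hnocut (fun v hv hb => hb.1 hv.2) ?_ hQ
    intro R hQR hRb hRc
    have hRD : R ⊆ D := conn_sub_of_mem hRc hRb (hQR hxQ) hxA.2
    have hRbC : R ⊆ (bdry G C)ᶜ := fun v hv hb =>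
      Set.eq_empty_iff_forall_notMem.mp hL2 v ⟨hRD hv, hb⟩
    have hRC : R ⊆ cstar G C := conn_sub_of_cstar hRc hRbC (hQR hxQ) hxA.1
    exact fun v hv => ⟨hRC hv, hRD hv⟩
  · -- A = cstar C ∩ cstar D
    subst hAeq
    refine slice_of hC hnocut (fun v hv hb => hv.1 (Or.inr hb)) ?_ hQ
    intro R hQR hRb hRc
    have hRC : R ⊆ cstar G C := conn_sub_of_cstar hRc hRb (hQR hxQ) hxA.1
    have hRbD : R ⊆ (bdry G D)ᶜ := fun v hv hb =>
      Set.eq_empty_iff_forall_notMem.mp hL1 v ⟨hRC hv, hb⟩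
    have hRD : R ⊆ cstar G D := conn_sub_of_cstar hRc hRbD (hQR hxQ) hxA.2
    exact fun v hv => ⟨hRC hv, hRD hv⟩
end

section
/- In a thin cut system, a slice has empty intersection with each separator; distinct slices are disjoint; and if Q is a slice then no two elements of NQ are separated by any separator of the system. -/
variable {V : Type*}

section StmtHelpers

open Set

variable {G : SimpleGraph V}

lemma mem_bdry' {C : Set V} {v : V} :
    v ∈ bdry G C ↔ v ∉ C ∧ ∃ u ∈ C, G.Adj u v := Iff.rfl

lemma mem_cstar' {C : Set V} {v : V} :
    v ∈ cstar G C ↔ v ∉ C ∧ v ∉ bdry G C := by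
  simp [cstar, not_or]

lemma not_adj_of_mem_cstar {C : Set V} {u v : V} (hu : u ∈ C) (hv : v ∈ cstar G C) :
    ¬ G.Adj u v := by
  intro hadj
  rcases mem_cstar'.1 hv with ⟨h1, h2⟩
  exact h2 ⟨h1, u, hu, hadj⟩

lemma compl_bdry (C : Set V) : (bdry G C)ᶜ = C ∪ cstar G C := by
  ext v
  by_cases hvC : v ∈ C
  · simp only [Set.mem_compl_iff, Set.mem_union, mem_bdry', mem_cstar']
    tauto
  · simp only [Set.mem_compl_iff, Set.mem_union, mem_cstar']
    tauto

lemma cstar_subset_compl_bdry (C : Set V) : cstar G C ⊆ (bdry G C)ᶜ := by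
  rw [compl_bdry]; exact Set.subset_union_right

lemma bdry_cstar_subset (C : Set V) : bdry G (cstar G C) ⊆ bdry G C := by
  rintro v ⟨hv, u, hu, huv⟩
  by_contra hvN
  by_cases hvC : v ∈ C
  · exact not_adj_of_mem_cstar hvC hu huv.symm
  · exact hv (mem_cstar'.2 ⟨hvC, hvN⟩)

lemma bdry_cstar_eq {C : Set V} (hss : cstar G (cstar G C) = C) :
    bdry G (cstar G C) = bdry G C := by
  refine Set.Subset.antisymm (bdry_cstar_subset C) ?_
  intro v hv
  have hvC : v ∉ C := hv.1
  have h1 : v ∉ cstar G C := fun hc => (mem_cstar'.1 hc).2 hv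
  have h2 : v ∉ cstar G (cstar G C) := by rw [hss]; exact hvC
  by_cases h3 : v ∈ bdry G (cstar G C)
  · exact h3
  · exact absurd (mem_cstar'.2 ⟨h1, h3⟩) h2

lemma bdry_inter_subset (X Y : Set V) :
    bdry G (X ∩ Y) ⊆ (X ∩ bdry G Y) ∪ (bdry G X ∩ Y) ∪ (bdry G X ∩ bdry G Y) := by
  rintro v ⟨hv, u, ⟨huX, huY⟩, huv⟩
  by_cases hvX : v ∈ X
  · have hvY : v ∉ Y := fun hY => hv ⟨hvX, hY⟩
    exact Or.inl (Or.inl ⟨hvX, hvY, u, huY, huv⟩)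
  · have hNX : v ∈ bdry G X := ⟨hvX, u, huX, huv⟩
    by_cases hvY : v ∈ Y
    · exact Or.inl (Or.inr ⟨hNX, hvY⟩)
    · exact Or.inr ⟨hNX, hvY, u, huY, huv⟩

lemma toSubgraph_le_induce_top {A : Set V} {u v : V} {p : G.Walk u v}
    (h : ∀ w ∈ p.support, w ∈ A) :
    p.toSubgraph ≤ (⊤ : SimpleGraph.Subgraph G).induce A := by
  constructor
  · intro w hw
    exact h w (p.mem_verts_toSubgraph.1 hw)
  · intro x y hxy
    exact ⟨h x (p.mem_verts_toSubgraph.1 hxy.fst_mem),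
      h y (p.mem_verts_toSubgraph.1 hxy.snd_mem), hxy.adj_sub⟩

lemma connSet_iff {A : Set V} :
    ConnSet G A ↔ A.Nonempty ∧
      ∀ u ∈ A, ∀ v ∈ A, ∃ p : G.Walk u v, ∀ w ∈ p.support, w ∈ A := by
  rw [ConnSet, SimpleGraph.connected_induce_iff,
    SimpleGraph.Subgraph.connected_iff_forall_exists_walk_subgraph]
  simp only [SimpleGraph.Subgraph.induce_verts, SimpleGraph.Subgraph.verts_top]
  constructor
  · rintro ⟨hne, hw⟩
    refine ⟨hne, fun u hu v hv => ?_⟩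
    obtain ⟨p, hp⟩ := hw hu hv
    exact ⟨p, fun w hws => hp.1 (p.mem_verts_toSubgraph.2 hws)⟩
  · rintro ⟨hne, hw⟩
    refine ⟨hne, ?_⟩
    intro u v hu hv
    obtain ⟨p, hp⟩ := hw u hu v hv
    exact ⟨p, toSubgraph_le_induce_top hp⟩

lemma connSet_singleton (v : V) : ConnSet G ({v} : Set V) := by
  rw [connSet_iff]
  refine ⟨⟨v, rfl⟩, ?_⟩
  intro u hu w hw
  rcases hu with rfl
  rcases hw with rfl
  exact ⟨SimpleGraph.Walk.nil, by simp⟩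

lemma connSet_union_adj {A B : Set V} (hA : ConnSet G A) (hB : ConnSet G B)
    {a b : V} (ha : a ∈ A) (hb : b ∈ B) (hab : G.Adj a b) : ConnSet G (A ∪ B) :=
  SimpleGraph.connected_induce_union hA.preconnected hB.preconnected ha hb hab

lemma connSet_union_common {A B : Set V} (hA : ConnSet G A) (hB : ConnSet G B)
    (hne : (A ∩ B).Nonempty) : ConnSet G (A ∪ B) :=
  SimpleGraph.induce_union_connected hA.preconnected hB.preconnected hne

lemma walk_stay {A X Y : Set V} (hAXY : A ⊆ X ∪ Y)
    (hsep : ∀ x ∈ X, ∀ y ∈ Y, ¬ G.Adj x y) :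
    ∀ (u v : V) (p : G.Walk u v), (∀ w ∈ p.support, w ∈ A) → u ∈ X → v ∈ X := by
  intro u v p
  induction p with
  | nil => exact fun _ hu => hu
  | @cons u u' v hadj q ih =>
    intro hsup hu
    have hu'A : u' ∈ A := hsup u' (by simp)
    have hu'X : u' ∈ X := by
      rcases hAXY hu'A with hX | hY
      · exact hX
      · exact absurd hadj (hsep u hu u' hY)
    exact ih (fun w hw => hsup w (by simp [hw])) hu'X

lemma connSet_subset_or {A X Y : Set V} (hA : ConnSet G A) (hAXY : A ⊆ X ∪ Y)
    (hsep : ∀ x ∈ X, ∀ y ∈ Y, ¬ G.Adj x y) :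
    A ⊆ X ∨ A ⊆ Y := by
  obtain ⟨⟨a, ha⟩, hwalk⟩ := connSet_iff.1 hA
  rcases hAXY ha with haX | haY
  · left
    intro v hv
    obtain ⟨p, hp⟩ := hwalk a ha v hv
    exact walk_stay hAXY hsep a v p hp haX
  · right
    intro v hv
    obtain ⟨p, hp⟩ := hwalk a ha v hv
    refine walk_stay (Set.union_comm X Y ▸ hAXY)
      (fun y hy x hx hadj => hsep x hx y hy hadj.symm) a v p hp haY

lemma exists_comp {A E : Set V} (hE : ConnSet G E) (hEA : E ⊆ A) :
    ∃ K : Set V, IsCompOf G K A ∧ E ⊆ K := by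
  classical
  obtain ⟨⟨e, he⟩, hEwalk⟩ := connSet_iff.1 hE
  set K : Set V := {v | v ∈ A ∧ ∃ p : G.Walk e v, ∀ w ∈ p.support, w ∈ A} with hKdef
  have heA : e ∈ A := hEA he
  have heK : e ∈ K := ⟨heA, SimpleGraph.Walk.nil, by simp [heA]⟩
  have hKA : K ⊆ A := fun v hv => hv.1
  have hmemK : ∀ (v : V) (p : G.Walk e v), (∀ w ∈ p.support, w ∈ A) → v ∈ K := by
    intro v p hp
    exact ⟨hp v p.end_mem_support, p, hp⟩
  have hKconn : ConnSet G K := by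
    rw [connSet_iff]
    refine ⟨⟨e, heK⟩, ?_⟩
    intro u hu v hv
    obtain ⟨huA, pu, hpu⟩ := hu
    obtain ⟨hvA, pv, hpv⟩ := hv
    refine ⟨pu.reverse.append pv, ?_⟩
    intro w hw
    rw [SimpleGraph.Walk.mem_support_append_iff] at hw
    rcases hw with hw | hw
    · rw [SimpleGraph.Walk.support_reverse, List.mem_reverse] at hw
      exact hmemK w (pu.takeUntil w hw)
        (fun z hz => hpu z (pu.support_takeUntil_subset hw hz))
    · exact hmemK w (pv.takeUntil w hw)
        (fun z hz => hpv z (pv.support_takeUntil_subset hw hz))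
  have hmax : ∀ R : Set V, K ⊆ R → R ⊆ A → ConnSet G R → R = K := by
    intro R hKR hRA hRconn
    refine Set.Subset.antisymm ?_ hKR
    intro r hr
    obtain ⟨hne, hw⟩ := connSet_iff.1 hRconn
    obtain ⟨p, hp⟩ := hw e (hKR heK) r hr
    exact hmemK r p (fun w hws => hRA (hp w hws))
  have hEK : E ⊆ K := by
    intro v hv
    obtain ⟨p, hp⟩ := hEwalk e he v hv
    exact hmemK v p (fun w hws => hEA (hp w hws))
  exact ⟨K, ⟨hKA, hKconn, hmax⟩, hEK⟩

lemma bdry_comp_subset {Q A : Set V} (hQ : IsCompOf G Q A) : bdry G Q ⊆ bdry G A := by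
  rintro v ⟨hvQ, u, huQ, huv⟩
  obtain ⟨hQA, hQconn, hmax⟩ := hQ
  by_cases hvA : v ∈ A
  · exfalso
    have hconn : ConnSet G (Q ∪ {v}) :=
      connSet_union_adj hQconn (connSet_singleton v) huQ rfl huv
    have heq := hmax (Q ∪ {v}) Set.subset_union_left
      (Set.union_subset hQA (Set.singleton_subset_iff.2 hvA)) hconn
    exact hvQ (heq ▸ Set.mem_union_right Q rfl)
  · exact ⟨hvA, u, hQA huQ, huv⟩

variable {𝒞 : Set (Set V)} {κ : ℕ}

lemma slice_facts (h : IsThinCutSystem G 𝒞 κ) {Q C : Set V} (hC : C ∈ 𝒞)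
    (hcomp : IsCompOf G Q (bdry G C)ᶜ) (hQnot : Q ∉ 𝒞) :
    Q ⊆ cstar G C ∧ ¬ ∃ E ∈ 𝒞, E ⊆ Q := by
  have hcut := h.toIsCutSystem
  have hsub : Q ⊆ C ∪ cstar G C := by rw [← compl_bdry]; exact hcomp.1
  have hsep : ∀ x ∈ C, ∀ y ∈ cstar G C, ¬ G.Adj x y :=
    fun x hx y hy => not_adj_of_mem_cstar hx hy
  have hQstar : Q ⊆ cstar G C := by
    rcases connSet_subset_or hcomp.2.1 hsub hsep with hQC | hQstar
    · exfalso
      have heq := hcomp.2.2 C hQC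
        (by rw [compl_bdry]; exact Set.subset_union_left) (hcut.conn C hC)
      exact hQnot (heq ▸ hC)
    · exact hQstar
  refine ⟨hQstar, ?_⟩
  rintro ⟨E, hE, hEQ⟩
  have hOpp : OppCorners G C C (C ∩ C) (cstar G C ∩ cstar G C) := Or.inl ⟨rfl, rfl⟩
  have hcutA : ∃ E' ∈ 𝒞, E' ⊆ C ∩ C := ⟨C, hC, by simp⟩
  have hQB : Q ⊆ cstar G C ∩ cstar G C := fun x hx => ⟨hQstar hx, hQstar hx⟩
  have hcutB : ∃ E' ∈ 𝒞, E' ⊆ cstar G C ∩ cstar G C := ⟨E, hE, hEQ.trans hQB⟩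
  have hcompB : IsCompOf G Q (cstar G C ∩ cstar G C) := by
    refine ⟨hQB, hcomp.2.1, ?_⟩
    intro R hQR hRB hRconn
    exact hcomp.2.2 R hQR
      (hRB.trans ((Set.inter_subset_left).trans (cstar_subset_compl_bdry C))) hRconn
  exact hQnot (hcut.a1 C hC C hC _ _ hOpp hcutA hcutB Q (Or.inr hcompB) ⟨E, hE, hEQ⟩)

lemma kernel (h : IsThinCutSystem G 𝒞 κ) {C D Q : Set V} (hC : C ∈ 𝒞) (hD : D ∈ 𝒞)
    (hQcomp : IsCompOf G Q (bdry G C)ᶜ) (hQstar : Q ⊆ cstar G C)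
    (hnocut : ¬ ∃ E ∈ 𝒞, E ⊆ Q)
    {Y Z : Set V}
    (hYbd : bdry G Y = bdry G D) (hZbd : bdry G Z = bdry G D)
    (hcover : ∀ v : V, v ∈ Y ∨ v ∈ bdry G D ∨ v ∈ Z)
    (hYT : ∀ v ∈ Y, v ∉ bdry G D) (hZT : ∀ v ∈ Z, v ∉ bdry G D)
    (hYZ : ∀ v ∈ Y, v ∉ Z)
    (hOpp : OppCorners G C D (C ∩ Y) (cstar G C ∩ Z))
    (hcutA : ∃ E ∈ 𝒞, E ⊆ C ∩ Y) (hcutB : ∃ E ∈ 𝒞, E ⊆ cstar G C ∩ Z)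
    {x : V} (hxQ : x ∈ Q) (hxD : x ∈ bdry G D) : False := by
  classical
  have hcut := h.toIsCutSystem
  set S := bdry G C with hSdef
  set T := bdry G D with hTdef
  have hSfin : S.Finite := hcut.finBd C hC
  have hTfin : T.Finite := hcut.finBd D hD
  have hSκ : S.ncard = κ := h.thin C hC
  have hTκ : T.ncard = κ := h.thin D hD
  obtain ⟨E₁, hE₁, hE₁A⟩ := hcutA
  obtain ⟨E₂, hE₂, hE₂B⟩ := hcutB
  obtain ⟨Q₁, hQ₁comp, hE₁Q₁⟩ := exists_comp (hcut.conn E₁ hE₁) hE₁A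
  obtain ⟨Q₂, hQ₂comp, hE₂Q₂⟩ := exists_comp (hcut.conn E₂ hE₂) hE₂B
  have hQ₁mem : Q₁ ∈ 𝒞 := hcut.a1 C hC D hD _ _ hOpp ⟨E₁, hE₁, hE₁A⟩ ⟨E₂, hE₂, hE₂B⟩
    Q₁ (Or.inl hQ₁comp) ⟨E₁, hE₁, hE₁Q₁⟩
  have hQ₂mem : Q₂ ∈ 𝒞 := hcut.a1 C hC D hD _ _ hOpp ⟨E₁, hE₁, hE₁A⟩ ⟨E₂, hE₂, hE₂B⟩
    Q₂ (Or.inr hQ₂comp) ⟨E₂, hE₂, hE₂Q₂⟩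
  have hScstar : bdry G (cstar G C) = S := bdry_cstar_eq (hcut.star_star C hC)
  set U₁ : Set V := (C ∩ T) ∪ (S ∩ Y) ∪ (S ∩ T) with hU₁def
  set U₂ : Set V := (cstar G C ∩ T) ∪ (S ∩ Z) ∪ (S ∩ T) with hU₂def
  have hbQ₁U₁ : bdry G Q₁ ⊆ U₁ := by
    refine (bdry_comp_subset hQ₁comp).trans ?_
    refine (bdry_inter_subset C Y).trans ?_
    rw [hYbd]
  have hbQ₂U₂ : bdry G Q₂ ⊆ U₂ := by
    refine (bdry_comp_subset hQ₂comp).trans ?_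
    refine (bdry_inter_subset (cstar G C) Z).trans ?_
    rw [hZbd, hScstar]
  have hU₁fin : U₁.Finite :=
    ((hTfin.subset Set.inter_subset_right).union (hSfin.subset Set.inter_subset_left)).union
      (hSfin.subset Set.inter_subset_left)
  have hU₂fin : U₂.Finite :=
    ((hTfin.subset Set.inter_subset_right).union (hSfin.subset Set.inter_subset_left)).union
      (hSfin.subset Set.inter_subset_left)
  -- partition of S along Y, T, Z
  have hSsplit : (S ∩ Y) ∪ ((S ∩ T) ∪ (S ∩ Z)) = S := by
    ext v
    simp only [Set.mem_union, Set.mem_inter_iff]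
    constructor
    · tauto
    · intro hv
      rcases hcover v with h1 | h1 | h1 <;> tauto
  have hSκ' : (S ∩ Y).ncard + ((S ∩ T).ncard + (S ∩ Z).ncard) = κ := by
    have d1 : Disjoint (S ∩ T) (S ∩ Z) :=
      Set.disjoint_left.mpr (fun {v} hv1 hv2 => hZT v hv2.2 hv1.2)
    have d2 : Disjoint (S ∩ Y) ((S ∩ T) ∪ (S ∩ Z)) := by
      refine Set.disjoint_left.mpr (fun {v} hv1 hv2 => ?_)
      rcases hv2 with hv2 | hv2
      · exact hYT v hv1.2 hv2.2
      · exact hYZ v hv1.2 hv2.2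
    have e1 : (S ∩ Y ∪ (S ∩ T ∪ S ∩ Z)).ncard = (S ∩ Y).ncard + (S ∩ T ∪ S ∩ Z).ncard :=
      Set.ncard_union_eq d2 (hSfin.subset Set.inter_subset_left)
        ((hSfin.subset Set.inter_subset_left).union (hSfin.subset Set.inter_subset_left))
    have e2 : (S ∩ T ∪ S ∩ Z).ncard = (S ∩ T).ncard + (S ∩ Z).ncard :=
      Set.ncard_union_eq d1 (hSfin.subset Set.inter_subset_left)
        (hSfin.subset Set.inter_subset_left)
    rw [hSsplit] at e1
    omega
  -- partition of T along C, S, cstar C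
  have hCcover : ∀ v : V, v ∈ C ∨ v ∈ S ∨ v ∈ cstar G C := by
    intro v
    by_cases h1 : v ∈ C
    · exact Or.inl h1
    by_cases h2 : v ∈ S
    · exact Or.inr (Or.inl h2)
    · exact Or.inr (Or.inr (mem_cstar'.2 ⟨h1, h2⟩))
  have hTsplit : (C ∩ T) ∪ ((S ∩ T) ∪ (cstar G C ∩ T)) = T := by
    ext v
    simp only [Set.mem_union, Set.mem_inter_iff]
    constructor
    · tauto
    · intro hv
      rcases hCcover v with h1 | h1 | h1 <;> tauto
  have hTκ' : (C ∩ T).ncard + ((S ∩ T).ncard + (cstar G C ∩ T).ncard) = κ := by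
    have d1 : Disjoint (S ∩ T) (cstar G C ∩ T) :=
      Set.disjoint_left.mpr (fun {v} hv1 hv2 => (mem_cstar'.1 hv2.1).2 hv1.1)
    have d2 : Disjoint (C ∩ T) ((S ∩ T) ∪ (cstar G C ∩ T)) := by
      refine Set.disjoint_left.mpr (fun {v} hv1 hv2 => ?_)
      rcases hv2 with hv2 | hv2
      · exact hv2.1.1 hv1.1
      · exact (mem_cstar'.1 hv2.1).1 hv1.1
    have e1 : (C ∩ T ∪ (S ∩ T ∪ cstar G C ∩ T)).ncard
        = (C ∩ T).ncard + (S ∩ T ∪ cstar G C ∩ T).ncard :=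
      Set.ncard_union_eq d2 (hTfin.subset Set.inter_subset_right)
        ((hTfin.subset Set.inter_subset_right).union (hTfin.subset Set.inter_subset_right))
    have e2 : (S ∩ T ∪ cstar G C ∩ T).ncard = (S ∩ T).ncard + (cstar G C ∩ T).ncard :=
      Set.ncard_union_eq d1 (hTfin.subset Set.inter_subset_right)
        (hTfin.subset Set.inter_subset_right)
    rw [hTsplit] at e1
    omega
  have hbQ₁κ : (bdry G Q₁).ncard = κ := h.thin Q₁ hQ₁mem
  have hbQ₂κ : (bdry G Q₂).ncard = κ := h.thin Q₂ hQ₂mem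
  have hκU₁ : κ ≤ U₁.ncard := hbQ₁κ ▸ Set.ncard_le_ncard hbQ₁U₁ hU₁fin
  have hκU₂ : κ ≤ U₂.ncard := hbQ₂κ ▸ Set.ncard_le_ncard hbQ₂U₂ hU₂fin
  have hU₁le : U₁.ncard ≤ (C ∩ T).ncard + (S ∩ Y).ncard + (S ∩ T).ncard :=
    (Set.ncard_union_le _ _).trans
      (Nat.add_le_add_right (Set.ncard_union_le _ _) _)
  have hU₂le : U₂.ncard ≤ (cstar G C ∩ T).ncard + (S ∩ Z).ncard + (S ∩ T).ncard :=
    (Set.ncard_union_le _ _).trans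
      (Nat.add_le_add_right (Set.ncard_union_le _ _) _)
  have hU₂κ : U₂.ncard = κ := by omega
  have hbQ₂eq : bdry G Q₂ = U₂ :=
    Set.eq_of_subset_of_ncard_le hbQ₂U₂ (by omega) hU₂fin
  have hxU₂ : x ∈ U₂ := Or.inl (Or.inl ⟨hQstar hxQ, hxD⟩)
  have hxbQ₂ : x ∈ bdry G Q₂ := hbQ₂eq ▸ hxU₂
  obtain ⟨hxQ₂, u, huQ₂, hux⟩ := hxbQ₂
  have hQ₂conn : ConnSet G Q₂ := hcut.conn Q₂ hQ₂mem
  have hRconn : ConnSet G (Q ∪ Q₂) :=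
    connSet_union_adj hQcomp.2.1 hQ₂conn hxQ huQ₂ hux.symm
  have hRsub : Q ∪ Q₂ ⊆ (bdry G C)ᶜ := by
    refine Set.union_subset hQcomp.1 ?_
    exact (hQ₂comp.1.trans Set.inter_subset_left).trans (cstar_subset_compl_bdry C)
  have hReq := hQcomp.2.2 (Q ∪ Q₂) Set.subset_union_left hRsub hRconn
  refine hnocut ⟨E₂, hE₂, ?_⟩
  intro z hz
  exact hReq ▸ Set.mem_union_right Q (hE₂Q₂ hz)

lemma slice_bdry_empty (h : IsThinCutSystem G 𝒞 κ) {Q C : Set V} (hC : C ∈ 𝒞)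
    (hcomp : IsCompOf G Q (bdry G C)ᶜ) (hQnot : Q ∉ 𝒞) :
    ∀ D ∈ 𝒞, Q ∩ bdry G D = ∅ := by
  intro D hD
  by_contra hne
  obtain ⟨x, hxQ, hxD⟩ := Set.nonempty_iff_ne_empty.2 hne
  obtain ⟨hQstar, hnocut⟩ := slice_facts h hC hcomp hQnot
  have hcut := h.toIsCutSystem
  have hssD := hcut.star_star D hD
  have hbdD : bdry G (cstar G D) = bdry G D := bdry_cstar_eq hssD
  have hcoverD : ∀ v : V, v ∈ D ∨ v ∈ bdry G D ∨ v ∈ cstar G D := by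
    intro v
    by_cases h1 : v ∈ D
    · exact Or.inl h1
    by_cases h2 : v ∈ bdry G D
    · exact Or.inr (Or.inl h2)
    · exact Or.inr (Or.inr (mem_cstar'.2 ⟨h1, h2⟩))
  have hDT : ∀ v ∈ D, v ∉ bdry G D := fun v hv hb => hb.1 hv
  have hDstarT : ∀ v ∈ cstar G D, v ∉ bdry G D := fun v hv => (mem_cstar'.1 hv).2
  have hDDstar : ∀ v ∈ D, v ∉ cstar G D := fun v hv hc => (mem_cstar'.1 hc).1 hv
  have hDstarD : ∀ v ∈ cstar G D, v ∉ D := fun v hv => (mem_cstar'.1 hv).1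
  obtain ⟨A, B, hOpp, hcutA, hcutB⟩ := hcut.a2 C hC D hD
  rcases hOpp with ⟨hA, hB⟩ | ⟨hA, hB⟩ | ⟨hA, hB⟩ | ⟨hA, hB⟩
  · subst hA; subst hB
    exact kernel h hC hD hcomp hQstar hnocut rfl hbdD hcoverD hDT hDstarT hDDstar
      (Or.inl ⟨rfl, rfl⟩) hcutA hcutB hxQ hxD
  · subst hA; subst hB
    exact kernel h hC hD hcomp hQstar hnocut rfl hbdD hcoverD hDT hDstarT hDDstar
      (Or.inl ⟨rfl, rfl⟩) hcutB hcutA hxQ hxD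
  · subst hA; subst hB
    exact kernel h hC hD hcomp hQstar hnocut hbdD rfl
      (fun v => by rcases hcoverD v with h1 | h1 | h1 <;> tauto)
      hDstarT hDT hDstarD
      (Or.inr (Or.inr (Or.inl ⟨rfl, rfl⟩))) hcutA hcutB hxQ hxD
  · subst hA; subst hB
    exact kernel h hC hD hcomp hQstar hnocut hbdD rfl
      (fun v => by rcases hcoverD v with h1 | h1 | h1 <;> tauto)
      hDstarT hDT hDstarD
      (Or.inr (Or.inr (Or.inl ⟨rfl, rfl⟩))) hcutB hcutA hxQ hxD

end StmtHelpers


theorem stmt13 (G : SimpleGraph V) (hG : G.Connected) (𝒞 : Set (Set V)) (κ : ℕ)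
    (h : IsThinCutSystem G 𝒞 κ) :
    (∀ Q : Set V, IsSlice G 𝒞 Q → ∀ C ∈ 𝒞, Q ∩ bdry G C = ∅) ∧
    (∀ Q₁ Q₂ : Set V, IsSlice G 𝒞 Q₁ → IsSlice G 𝒞 Q₂ → Q₁ ≠ Q₂ →
      Q₁ ∩ Q₂ = ∅) ∧
    (∀ Q : Set V, IsSlice G 𝒞 Q → ∀ x ∈ bdry G Q, ∀ y ∈ bdry G Q,
      ∀ C ∈ 𝒞, ¬ SepVert G (bdry G C) x y) := by
  have hcut := h.toIsCutSystem
  have s1 : ∀ Q : Set V, IsSlice G 𝒞 Q → ∀ C ∈ 𝒞, Q ∩ bdry G C = ∅ := by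
    rintro Q ⟨⟨C₀, hC₀, hcomp⟩, hQnot⟩ C hC
    exact slice_bdry_empty h hC₀ hcomp hQnot C hC
  refine ⟨s1, ?_, ?_⟩
  · rintro Q₁ Q₂ hQ₁ hQ₂ hne
    by_contra hni
    obtain ⟨x, hx₁, hx₂⟩ := Set.nonempty_iff_ne_empty.2 hni
    obtain ⟨⟨C₁, hC₁, hcomp₁⟩, hQ₁not⟩ := hQ₁
    obtain ⟨⟨C₂, hC₂, hcomp₂⟩, hQ₂not⟩ := hQ₂
    have h12 : Q₁ ∩ bdry G C₂ = ∅ := slice_bdry_empty h hC₁ hcomp₁ hQ₁not C₂ hC₂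
    have h21 : Q₂ ∩ bdry G C₁ = ∅ := slice_bdry_empty h hC₂ hcomp₂ hQ₂not C₁ hC₁
    have hsub12 : Q₁ ⊆ (bdry G C₂)ᶜ := fun v hv hb =>
      (Set.eq_empty_iff_forall_notMem.1 h12 v) ⟨hv, hb⟩
    have hsub21 : Q₂ ⊆ (bdry G C₁)ᶜ := fun v hv hb =>
      (Set.eq_empty_iff_forall_notMem.1 h21 v) ⟨hv, hb⟩
    have hconn : ConnSet G (Q₁ ∪ Q₂) :=
      connSet_union_common hcomp₁.2.1 hcomp₂.2.1 ⟨x, hx₁, hx₂⟩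
    have he2 : Q₁ ∪ Q₂ = Q₂ := by
      have := hcomp₂.2.2 (Q₁ ∪ Q₂) Set.subset_union_right
        (Set.union_subset hsub12 hcomp₂.1) hconn
      exact this
    have he1 : Q₁ ∪ Q₂ = Q₁ :=
      hcomp₁.2.2 (Q₁ ∪ Q₂) Set.subset_union_left
        (Set.union_subset hcomp₁.1 hsub21) hconn
    exact hne (he1 ▸ he2)
  · rintro Q hQ x hx y hy C hC ⟨hxn, hyn, hK⟩
    obtain ⟨⟨C₀, hC₀, hcomp⟩, hQnot⟩ := hQ
    have hQD : Q ∩ bdry G C = ∅ := slice_bdry_empty h hC₀ hcomp hQnot C hC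
    obtain ⟨hxQ, qx, hqx, hqxadj⟩ := hx
    obtain ⟨hyQ, qy, hqy, hqyadj⟩ := hy
    have hc1 : ConnSet G (Q ∪ {x}) :=
      connSet_union_adj hcomp.2.1 (connSet_singleton x) hqx rfl hqxadj
    have hc2 : ConnSet G ((Q ∪ {x}) ∪ {y}) :=
      connSet_union_adj hc1 (connSet_singleton y) (Or.inl hqy) rfl hqyadj
    have hEsub : (Q ∪ {x}) ∪ {y} ⊆ (bdry G C)ᶜ := by
      rintro v ((hv | hv) | hv)
      · exact fun hb => (Set.eq_empty_iff_forall_notMem.1 hQD v) ⟨hv, hb⟩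
      · rcases hv with rfl; exact hxn
      · rcases hv with rfl; exact hyn
    obtain ⟨K, hKcomp, hEK⟩ := exists_comp hc2 hEsub
    exact hK K hKcomp (hEK (Or.inl (Or.inr rfl))) (hEK (Or.inr rfl))
end

section
/- If a group G acts transitively on a connected graph X preserving a thin cut system, then the system has no slices. -/
variable {V : Type*}

/-! ### Auxiliary machinery for the proof of `stmt14` -/

open Relation

/-- Reachability within a vertex set (chains staying in `s` after the start). -/
def DKReach (G : SimpleGraph V) (s : Set V) : V → V → Prop :=
  Relation.ReflTransGen (fun a b => b ∈ s ∧ G.Adj a b)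

namespace DK

variable {G : SimpleGraph V} {s t C D P R Q K T : Set V} {u v x : V}

lemma reach_mem (hu : u ∈ s) (h : DKReach G s u v) : v ∈ s := by
  induction h with
  | refl => exact hu
  | tail _ hstep _ => exact hstep.1

lemma reach_mono (hst : s ⊆ t) (h : DKReach G s u v) : DKReach G t u v :=
  ReflTransGen.mono (fun _ _ hab => ⟨hst hab.1, hab.2⟩) _ _ h

lemma walk_reach : ∀ {a b : s}, (G.induce s).Walk a b → DKReach G s a.1 b.1
  | _, _, SimpleGraph.Walk.nil => .refl
  | _, _, SimpleGraph.Walk.cons h p =>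
      ReflTransGen.head ⟨by exact Subtype.coe_prop _, by exact h⟩ (walk_reach p)

lemma connSet_reach (h : ConnSet G s) (hu : u ∈ s) (hv : v ∈ s) :
    DKReach G s u v := by
  obtain ⟨w⟩ := h.preconnected ⟨u, hu⟩ ⟨v, hv⟩
  exact walk_reach w

lemma connSet_nonempty (h : ConnSet G s) : s.Nonempty := by
  obtain ⟨⟨x, hx⟩⟩ := h.nonempty
  exact ⟨x, hx⟩

lemma reach_reachable (hu : u ∈ s) (h : DKReach G s u v) :
    ∀ (hv : v ∈ s), (G.induce s).Reachable ⟨u, hu⟩ ⟨v, hv⟩ := by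
  induction h with
  | refl => intro _; rfl
  | tail h₁ hstep ih =>
      intro hv
      have hb := reach_mem hu h₁
      exact (ih hb).trans (SimpleGraph.Adj.reachable (by exact hstep.2))

lemma connSet_of_hub (hu : u ∈ s) (hhub : ∀ v ∈ s, DKReach G s u v) :
    ConnSet G s := by
  rw [ConnSet, SimpleGraph.connected_iff]
  refine ⟨?_, ⟨⟨u, hu⟩⟩⟩
  rintro ⟨a, ha⟩ ⟨b, hb⟩
  exact ((reach_reachable hu (hhub a ha) ha).symm).trans
    (reach_reachable hu (hhub b hb) hb)

/-- Component of `s` containing `x`. -/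
def compo (G : SimpleGraph V) (s : Set V) (x : V) : Set V := {y | DKReach G s x y}

lemma mem_compo_self : x ∈ compo G s x := ReflTransGen.refl

lemma compo_subset (hx : x ∈ s) : compo G s x ⊆ s := fun _ hy => reach_mem hx hy

lemma reach_compo (h : DKReach G s x v) : DKReach G (compo G s x) x v := by
  induction h with
  | refl => exact .refl
  | tail h₁ hstep ih => exact ReflTransGen.tail ih ⟨ReflTransGen.tail h₁ hstep, hstep.2⟩

lemma isCompOf_compo (hx : x ∈ s) : IsCompOf G (compo G s x) s := by
  refine ⟨compo_subset hx, ?_, ?_⟩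
  · exact connSet_of_hub mem_compo_self (fun v hv => reach_compo hv)
  · intro R hQR hRs hR
    apply Set.Subset.antisymm _ hQR
    intro y hy
    exact ReflTransGen.mono
      (fun a b hab => ⟨hRs hab.1, hab.2⟩) _ _ (connSet_reach hR (hQR mem_compo_self) hy)

lemma absorb (hQ : IsCompOf G Q s) (hT : ConnSet G T) (hTs : T ⊆ s)
    (hmeet : (T ∩ Q).Nonempty) : T ⊆ Q := by
  obtain ⟨z, hzT, hzQ⟩ := hmeet
  have hzs : z ∈ s := hQ.1 hzQ
  have hcQ : compo G s z ⊆ Q := by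
    have hUconn : ConnSet G (Q ∪ compo G s z) := by
      apply connSet_of_hub (u := z) (Or.inl hzQ)
      rintro v (hv | hv)
      · exact ReflTransGen.mono
          (fun a b hab => ⟨Or.inl hab.1, hab.2⟩) _ _ (connSet_reach hQ.2.1 hzQ hv)
      · exact ReflTransGen.mono (fun a b hab => ⟨Or.inr hab.1, hab.2⟩) _ _ (reach_compo hv)
    have := hQ.2.2 (Q ∪ compo G s z) Set.subset_union_left
      (Set.union_subset hQ.1 (compo_subset hzs)) hUconn
    rw [← this]; exact Set.subset_union_right
  intro y hyT
  exact hcQ (ReflTransGen.mono (fun a b hab => ⟨hTs hab.1, hab.2⟩) _ _ (connSet_reach hT hzT hyT))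

lemma mem_comp_of_adj (hQ : IsCompOf G Q s) (hx : x ∈ s) {q : V} (hq : q ∈ Q)
    (hadj : G.Adj q x) : x ∈ Q := by
  have : ({x} ∪ Q : Set V) ⊆ Q := by
    apply absorb hQ _ (Set.union_subset (by simpa using hx) hQ.1) ⟨q, Or.inr hq, hq⟩
    apply connSet_of_hub (u := q) (Or.inr hq)
    rintro v (rfl | hv)
    · exact ReflTransGen.single ⟨Or.inl rfl, hadj⟩
    · exact ReflTransGen.mono (fun a b hab => ⟨Or.inr hab.1, hab.2⟩) _ _ (connSet_reach hQ.2.1 hq hv)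
  exact this (Or.inl rfl)

lemma mem_bdry_of_adj (hx : x ∈ C) (hv : v ∉ C) (hadj : G.Adj x v) : v ∈ bdry G C :=
  ⟨hv, x, hx, hadj⟩

lemma cstar_spec (hv : v ∈ cstar G C) : v ∉ C ∧ v ∉ bdry G C := by
  have : ¬ (v ∈ C ∨ v ∈ bdry G C) := hv
  tauto

lemma mem_cstar (h1 : v ∉ C) (h2 : v ∉ bdry G C) : v ∈ cstar G C := by
  intro hvc
  rcases hvc with hc | hb
  · exact h1 hc
  · exact h2 hb

lemma tri (G : SimpleGraph V) (C : Set V) (v : V) :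
    v ∈ C ∨ v ∈ bdry G C ∨ v ∈ cstar G C := by
  by_cases h1 : v ∈ C
  · exact Or.inl h1
  by_cases h2 : v ∈ bdry G C
  · exact Or.inr (Or.inl h2)
  exact Or.inr (Or.inr (mem_cstar h1 h2))

lemma adj_cstar_not_mem (hx : x ∈ cstar G C) (hadj : G.Adj x v) (hv : v ∈ C) : False :=
  (cstar_spec hx).2 (mem_bdry_of_adj hv (cstar_spec hx).1 hadj.symm)

/-- Exiting `D` or `cstar D` lands in `bdry D`. -/
lemma exit_to_bdry (hR : R = D ∨ R = cstar G D) (hx : x ∈ R) (hv : v ∉ R)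
    (hadj : G.Adj x v) : v ∈ bdry G D := by
  rcases hR with rfl | rfl
  · exact mem_bdry_of_adj hx hv hadj
  · rcases tri G D v with hc | hb | hs
    · exact absurd (adj_cstar_not_mem hx hadj hc) not_false
    · exact hb
    · exact absurd hs hv

lemma cstar_disj_left : C ∩ cstar G C = ∅ := by
  ext v; simp only [Set.mem_inter_iff, Set.mem_empty_iff_false, iff_false]
  rintro ⟨h1, h2⟩; exact (cstar_spec h2).1 h1

lemma cover (G : SimpleGraph V) (C : Set V) : C ∪ bdry G C ∪ cstar G C = Set.univ := by
  ext v
  simp only [Set.mem_union, Set.mem_univ, iff_true]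
  rcases tri G C v with h | h | h
  · exact Or.inl (Or.inl h)
  · exact Or.inl (Or.inr h)
  · exact Or.inr h

/-- Boundary of a component of a corner `P ∩ R` is controlled. -/
lemma bdry_comp_corner (hP : P = C ∨ P = cstar G C)
    (hR : R = D ∨ R = cstar G D) (hK : IsCompOf G K (P ∩ R)) :
    bdry G K ⊆ (P ∩ bdry G D) ∪ (bdry G C ∩ (R ∪ bdry G D)) := by
  rintro v ⟨hvK, x, hxK, hadj⟩
  have hxP : x ∈ P := (hK.1 hxK).1
  have hxR : x ∈ R := (hK.1 hxK).2
  have hvPR : v ∉ P ∩ R := fun hv => hvK (mem_comp_of_adj hK hv hxK hadj)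
  by_cases hvP : v ∈ P
  · have hvR : v ∉ R := fun hh => hvPR ⟨hvP, hh⟩
    exact Or.inl ⟨hvP, exit_to_bdry hR hxR hvR hadj⟩
  · have hvNC : v ∈ bdry G C := exit_to_bdry hP hxP hvP hadj
    by_cases hvR : v ∈ R
    · exact Or.inr ⟨hvNC, Or.inl hvR⟩
    · exact Or.inr ⟨hvNC, Or.inr (exit_to_bdry hR hxR hvR hadj)⟩

/-- The submodularity-style counting bound for opposite corners. -/
lemma corner_count {R₁ R₂ : Set V}
    (hNCf : (bdry G C).Finite) (hNDf : (bdry G D).Finite)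
    (hR : (R₁ = D ∧ R₂ = cstar G D) ∨ (R₁ = cstar G D ∧ R₂ = D)) :
    ((C ∩ bdry G D) ∪ (bdry G C ∩ (R₁ ∪ bdry G D))).ncard +
      ((cstar G C ∩ bdry G D) ∪ (bdry G C ∩ (R₂ ∪ bdry G D))).ncard ≤
      (bdry G C).ncard + (bdry G D).ncard := by
  have hcup' : R₁ ∪ R₂ = D ∪ cstar G D := by
    rcases hR with ⟨h1, h2⟩ | ⟨h1, h2⟩
    · rw [h1, h2]
    · rw [h1, h2, Set.union_comm]
  have hcupR : R₁ ∪ R₂ ∪ bdry G D = Set.univ := by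
    rw [hcup']
    rw [show D ∪ cstar G D ∪ bdry G D = D ∪ bdry G D ∪ cstar G D by
      ext y; simp only [Set.mem_union]; tauto]
    exact cover G D
  have hdisjR : R₁ ∩ R₂ = ∅ := by
    rcases hR with ⟨h1, h2⟩ | ⟨h1, h2⟩
    · rw [h1, h2]; exact cstar_disj_left
    · rw [h1, h2, Set.inter_comm]; exact cstar_disj_left
  have f1 : (C ∩ bdry G D).Finite := hNDf.subset Set.inter_subset_right
  have f1' : (cstar G C ∩ bdry G D).Finite := hNDf.subset Set.inter_subset_right
  have fb1 : (bdry G C ∩ (R₁ ∪ bdry G D)).Finite := hNCf.subset Set.inter_subset_left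
  have fb2 : (bdry G C ∩ (R₂ ∪ bdry G D)).Finite := hNCf.subset Set.inter_subset_left
  have fm : (bdry G C ∩ bdry G D).Finite := hNCf.subset Set.inter_subset_left
  have hU1 : ((C ∩ bdry G D) ∪ (bdry G C ∩ (R₁ ∪ bdry G D))).ncard ≤
      (C ∩ bdry G D).ncard + (bdry G C ∩ (R₁ ∪ bdry G D)).ncard :=
    Set.ncard_union_le _ _
  have hU2 : ((cstar G C ∩ bdry G D) ∪ (bdry G C ∩ (R₂ ∪ bdry G D))).ncard ≤
      (cstar G C ∩ bdry G D).ncard + (bdry G C ∩ (R₂ ∪ bdry G D)).ncard :=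
    Set.ncard_union_le _ _
  have hbcup : (bdry G C ∩ (R₁ ∪ bdry G D)) ∪ (bdry G C ∩ (R₂ ∪ bdry G D)) = bdry G C := by
    rw [← Set.inter_union_distrib_left]
    rw [show (R₁ ∪ bdry G D) ∪ (R₂ ∪ bdry G D) = R₁ ∪ R₂ ∪ bdry G D by
      ext y; simp only [Set.mem_union]; tauto]
    rw [hcupR, Set.inter_univ]
  have hbcap : (bdry G C ∩ (R₁ ∪ bdry G D)) ∩ (bdry G C ∩ (R₂ ∪ bdry G D)) ⊆
      bdry G C ∩ bdry G D := by
    rintro y ⟨⟨hy1, hy2⟩, ⟨_, hy4⟩⟩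
    refine ⟨hy1, ?_⟩
    rcases hy2 with hy2 | hy2
    · rcases hy4 with hy4 | hy4
      · have hmem : y ∈ R₁ ∩ R₂ := ⟨hy2, hy4⟩
        rw [hdisjR] at hmem
        exact hmem.elim
      · exact hy4
    · exact hy2
  have hbsum : (bdry G C ∩ (R₁ ∪ bdry G D)).ncard + (bdry G C ∩ (R₂ ∪ bdry G D)).ncard
      ≤ (bdry G C).ncard + (bdry G C ∩ bdry G D).ncard := by
    have h1 := Set.ncard_union_add_ncard_inter _ _ fb1 fb2
    rw [hbcup] at h1
    have hle := Set.ncard_le_ncard hbcap fm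
    omega
  have hasum : (C ∩ bdry G D).ncard + (cstar G C ∩ bdry G D).ncard +
      (bdry G C ∩ bdry G D).ncard ≤ (bdry G D).ncard := by
    have hd1 : Disjoint (C ∩ bdry G D) (cstar G C ∩ bdry G D) := by
      rw [Set.disjoint_iff_inter_eq_empty]
      ext y; simp only [Set.mem_inter_iff, Set.mem_empty_iff_false, iff_false]
      rintro ⟨⟨h1, _⟩, ⟨h2, _⟩⟩
      exact (cstar_spec h2).1 h1
    have hd2 : Disjoint ((C ∩ bdry G D) ∪ (cstar G C ∩ bdry G D))
        (bdry G C ∩ bdry G D) := by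
      rw [Set.disjoint_iff_inter_eq_empty]
      ext y
      simp only [Set.mem_inter_iff, Set.mem_union, Set.mem_empty_iff_false, iff_false]
      rintro ⟨h1 | h1, h2, _⟩
      · exact h2.1 h1.1
      · exact (cstar_spec h1.1).2 h2
    have e1 : ((C ∩ bdry G D) ∪ (cstar G C ∩ bdry G D)).ncard =
        (C ∩ bdry G D).ncard + (cstar G C ∩ bdry G D).ncard :=
      Set.ncard_union_eq hd1 f1 f1'
    have e2 : (((C ∩ bdry G D) ∪ (cstar G C ∩ bdry G D)) ∪ (bdry G C ∩ bdry G D)).ncard =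
        ((C ∩ bdry G D) ∪ (cstar G C ∩ bdry G D)).ncard + (bdry G C ∩ bdry G D).ncard :=
      Set.ncard_union_eq hd2 (f1.union f1') fm
    have hsub : ((C ∩ bdry G D) ∪ (cstar G C ∩ bdry G D)) ∪ (bdry G C ∩ bdry G D) ⊆
        bdry G D := by
      rintro y ((⟨_, hy⟩ | ⟨_, hy⟩) | ⟨_, hy⟩) <;> exact hy
    have h3 := Set.ncard_le_ncard hsub hNDf
    omega
  omega

/-- Key Lemma: the boundary of any cut avoids any cut-free component of `cstar C`. -/
lemma key {𝒞 : Set (Set V)} {κ : ℕ} (h : IsThinCutSystem G 𝒞 κ)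
    (hC : C ∈ 𝒞) (hD : D ∈ 𝒞)
    (hQ : IsCompOf G Q (cstar G C)) (hQfree : ¬ ∃ E ∈ 𝒞, E ⊆ Q) :
    Q ∩ bdry G D = ∅ := by
  by_contra hne
  obtain ⟨u, huQ, huND⟩ := Set.nonempty_iff_ne_empty.mpr hne
  have core : ∀ R₁ R₂ : Set V,
      ((R₁ = D ∧ R₂ = cstar G D) ∨ (R₁ = cstar G D ∧ R₂ = D)) →
      (∃ E ∈ 𝒞, E ⊆ C ∩ R₁) → (∃ E ∈ 𝒞, E ⊆ cstar G C ∩ R₂) →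
      (∀ K : Set V, IsCompOf G K (C ∩ R₁) → (∃ E ∈ 𝒞, E ⊆ K) → K ∈ 𝒞) →
      (∀ K : Set V, IsCompOf G K (cstar G C ∩ R₂) → (∃ E ∈ 𝒞, E ⊆ K) → K ∈ 𝒞) →
      False := by
    intro R₁ R₂ hR hE₁ hE₂ ha1₁ ha1₂
    have hR₁ : R₁ = D ∨ R₁ = cstar G D := by tauto
    have hR₂ : R₂ = D ∨ R₂ = cstar G D := by tauto
    obtain ⟨E₁, hE₁c, hE₁s⟩ := hE₁
    obtain ⟨E₂, hE₂c, hE₂s⟩ := hE₂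
    obtain ⟨x₁, hx₁⟩ := h.toIsCutSystem.nonempty E₁ hE₁c
    obtain ⟨x₂, hx₂⟩ := h.toIsCutSystem.nonempty E₂ hE₂c
    set K₁ := compo G (C ∩ R₁) x₁ with hK₁def
    set K₂ := compo G (cstar G C ∩ R₂) x₂ with hK₂def
    have hK₁comp : IsCompOf G K₁ (C ∩ R₁) := isCompOf_compo (hE₁s hx₁)
    have hK₂comp : IsCompOf G K₂ (cstar G C ∩ R₂) := isCompOf_compo (hE₂s hx₂)
    have hE₁K : E₁ ⊆ K₁ :=
      absorb hK₁comp (h.toIsCutSystem.conn E₁ hE₁c) hE₁s ⟨x₁, hx₁, mem_compo_self⟩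
    have hE₂K : E₂ ⊆ K₂ :=
      absorb hK₂comp (h.toIsCutSystem.conn E₂ hE₂c) hE₂s ⟨x₂, hx₂, mem_compo_self⟩
    have hK₁c : K₁ ∈ 𝒞 := ha1₁ K₁ hK₁comp ⟨E₁, hE₁c, hE₁K⟩
    have hK₂c : K₂ ∈ 𝒞 := ha1₂ K₂ hK₂comp ⟨E₂, hE₂c, hE₂K⟩
    have hNCf := h.toIsCutSystem.finBd C hC
    have hNDf := h.toIsCutSystem.finBd D hD
    have hB₁ : bdry G K₁ ⊆ (C ∩ bdry G D) ∪ (bdry G C ∩ (R₁ ∪ bdry G D)) :=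
      bdry_comp_corner (Or.inl rfl) hR₁ hK₁comp
    have hB₂ : bdry G K₂ ⊆ (cstar G C ∩ bdry G D) ∪ (bdry G C ∩ (R₂ ∪ bdry G D)) :=
      bdry_comp_corner (Or.inr rfl) hR₂ hK₂comp
    have hU₁f : ((C ∩ bdry G D) ∪ (bdry G C ∩ (R₁ ∪ bdry G D))).Finite :=
      (hNDf.subset Set.inter_subset_right).union (hNCf.subset Set.inter_subset_left)
    have hU₂f : ((cstar G C ∩ bdry G D) ∪ (bdry G C ∩ (R₂ ∪ bdry G D))).Finite :=
      (hNDf.subset Set.inter_subset_right).union (hNCf.subset Set.inter_subset_left)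
    have hcount := corner_count (C := C) (D := D) hNCf hNDf hR
    have hκ₁ : (bdry G K₁).ncard = κ := h.thin K₁ hK₁c
    have hκ₂ : (bdry G K₂).ncard = κ := h.thin K₂ hK₂c
    have hκC : (bdry G C).ncard = κ := h.thin C hC
    have hκD : (bdry G D).ncard = κ := h.thin D hD
    have hle₁ : κ ≤ ((C ∩ bdry G D) ∪ (bdry G C ∩ (R₁ ∪ bdry G D))).ncard := by
      rw [← hκ₁]; exact Set.ncard_le_ncard hB₁ hU₁f
    have hEq : bdry G K₂ = (cstar G C ∩ bdry G D) ∪ (bdry G C ∩ (R₂ ∪ bdry G D)) :=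
      Set.eq_of_subset_of_ncard_le hB₂ (by omega) hU₂f
    have huU : u ∈ (cstar G C ∩ bdry G D) ∪ (bdry G C ∩ (R₂ ∪ bdry G D)) :=
      Or.inl ⟨hQ.1 huQ, huND⟩
    rw [← hEq] at huU
    obtain ⟨huK₂, y, hyK₂, hadjyu⟩ := huU
    have hycs : y ∈ cstar G C := (hK₂comp.1 hyK₂).1
    have hyQ : y ∈ Q := mem_comp_of_adj hQ hycs huQ hadjyu.symm
    have hK₂Q : K₂ ⊆ Q :=
      absorb hQ hK₂comp.2.1 (hK₂comp.1.trans Set.inter_subset_left) ⟨y, hyK₂, hyQ⟩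
    exact hQfree ⟨K₂, hK₂c, hK₂Q⟩
  obtain ⟨A, B, hOpp, hA, hB⟩ := h.toIsCutSystem.a2 C hC D hD
  have ha1 := h.toIsCutSystem.a1 C hC D hD A B hOpp hA hB
  rcases hOpp with ⟨hAe, hBe⟩ | ⟨hAe, hBe⟩ | ⟨hAe, hBe⟩ | ⟨hAe, hBe⟩ <;>
    subst hAe <;> subst hBe
  · exact core D (cstar G D) (Or.inl ⟨rfl, rfl⟩) hA hB
      (fun K hK hE => ha1 K (Or.inl hK) hE) (fun K hK hE => ha1 K (Or.inr hK) hE)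
  · exact core D (cstar G D) (Or.inl ⟨rfl, rfl⟩) hB hA
      (fun K hK hE => ha1 K (Or.inr hK) hE) (fun K hK hE => ha1 K (Or.inl hK) hE)
  · exact core (cstar G D) D (Or.inr ⟨rfl, rfl⟩) hA hB
      (fun K hK hE => ha1 K (Or.inl hK) hE) (fun K hK hE => ha1 K (Or.inr hK) hE)
  · exact core (cstar G D) D (Or.inr ⟨rfl, rfl⟩) hB hA
      (fun K hK hE => ha1 K (Or.inr hK) hE) (fun K hK hE => ha1 K (Or.inl hK) hE)

lemma bdry_comp_subset (hQ : IsCompOf G Q (bdry G C)ᶜ) : bdry G Q ⊆ bdry G C := by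
  rintro v ⟨hvQ, x, hxQ, hadj⟩
  by_contra hvNC
  exact hvQ (mem_comp_of_adj hQ hvNC hxQ hadj)

lemma reach_stay (hstart : u ∈ C) (hs : s ⊆ (bdry G C)ᶜ)
    (h : DKReach G s u v) : v ∈ C := by
  induction h with
  | refl => exact hstart
  | tail _ hstep ih =>
      by_contra hvC
      exact hs hstep.1 (mem_bdry_of_adj ih hvC hstep.2)

/-- A component of `(bdry C)ᶜ` is either `C` itself or a component of `cstar C`. -/
lemma comp_bdry_cases (hCconn : ConnSet G C)
    (hQ : IsCompOf G Q (bdry G C)ᶜ) : Q = C ∨ IsCompOf G Q (cstar G C) := by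
  have hCsub : C ⊆ (bdry G C)ᶜ := fun c hc hb => hb.1 hc
  by_cases hmeet : (Q ∩ C).Nonempty
  · left
    obtain ⟨z, hzQ, hzC⟩ := hmeet
    have hCQ : C ⊆ Q := absorb hQ hCconn hCsub ⟨z, hzC, hzQ⟩
    refine Set.Subset.antisymm ?_ hCQ
    intro y hy
    exact reach_stay hzC hQ.1 (connSet_reach hQ.2.1 hzQ hy)
  · right
    have hQcs : Q ⊆ cstar G C := by
      intro q hq
      refine mem_cstar (fun hqC => hmeet ⟨q, hq, hqC⟩) (hQ.1 hq)
    refine ⟨hQcs, hQ.2.1, fun R h1 h2 h3 => hQ.2.2 R h1 (h2.trans ?_) h3⟩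
    intro y hy
    exact (cstar_spec hy).2

lemma bdry_nonempty_aux : ∀ {u v : V}, G.Walk u v → u ∈ s → v ∉ s →
    (bdry G s).Nonempty
  | _, _, SimpleGraph.Walk.nil, hu, hv => absurd hu hv
  | _, _, SimpleGraph.Walk.cons (v := b) hab p, hu, hv => by
      by_cases hb : b ∈ s
      · exact bdry_nonempty_aux p hb hv
      · exact ⟨b, mem_bdry_of_adj hu hb hab⟩

lemma bdry_nonempty (hG : G.Connected) (h1 : s.Nonempty) (h2 : sᶜ.Nonempty) :
    (bdry G s).Nonempty := by
  obtain ⟨a, ha⟩ := h1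
  obtain ⟨b, hb⟩ := h2
  obtain ⟨w⟩ := hG.preconnected a b
  exact bdry_nonempty_aux w ha hb

end DK

section DKSmul

open DK Pointwise

variable {G : SimpleGraph V} {Γ : Type*} [Group Γ] [MulAction Γ V]
variable {C Q A s : Set V} {u v : V}

variable (hadj : ∀ (g : Γ) (u v : V), G.Adj u v ↔ G.Adj (g • u) (g • v))

include hadj

lemma DK.bdry_smul (g : Γ) : bdry G (g • C) = g • bdry G C := by
  ext v
  rw [Set.mem_smul_set_iff_inv_smul_mem]
  constructor
  · rintro ⟨h1, u, hu, hadj'⟩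
    rw [Set.mem_smul_set_iff_inv_smul_mem] at h1 hu
    exact ⟨h1, g⁻¹ • u, hu, (hadj g⁻¹ u v).mp hadj'⟩
  · rintro ⟨h1, u, hu, hadj'⟩
    refine ⟨fun hh => h1 (by rwa [Set.mem_smul_set_iff_inv_smul_mem] at hh), g • u,
      Set.smul_mem_smul_set hu, ?_⟩
    have := (hadj g u (g⁻¹ • v)).mp hadj'
    rwa [smul_inv_smul] at this

lemma DK.reach_smul (g : Γ) (h : DKReach G s u v) :
    DKReach G (g • s) (g • u) (g • v) := by
  induction h with
  | refl => exact .refl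
  | tail _ hstep ih =>
      exact ReflTransGen.tail ih
        ⟨Set.smul_mem_smul_set hstep.1, (hadj g _ _).mp hstep.2⟩

lemma DK.connSet_smul (g : Γ) (h : ConnSet G s) : ConnSet G (g • s) := by
  obtain ⟨u, hu⟩ := connSet_nonempty h
  apply connSet_of_hub (u := g • u) (Set.smul_mem_smul_set hu)
  rintro v hv
  obtain ⟨y, hy, rfl⟩ := hv
  exact reach_smul hadj g (connSet_reach h hu hy)

lemma DK.isCompOf_smul (g : Γ) (h : IsCompOf G Q A) : IsCompOf G (g • Q) (g • A) := by
  refine ⟨Set.smul_set_mono h.1, connSet_smul hadj g h.2.1, ?_⟩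
  intro R h1 h2 h3
  have h4 : Q ⊆ g⁻¹ • R := by
    intro q hq
    have : g • q ∈ R := h1 (Set.smul_mem_smul_set hq)
    rwa [Set.mem_smul_set_iff_inv_smul_mem, inv_inv]
  have h5 : g⁻¹ • R ⊆ A := by
    intro r hr
    rw [Set.mem_smul_set_iff_inv_smul_mem, inv_inv] at hr
    have := h2 hr
    rwa [Set.mem_smul_set_iff_inv_smul_mem, inv_smul_smul] at this
  have h6 := h.2.2 (g⁻¹ • R) h4 h5 (connSet_smul hadj g⁻¹ h3)
  calc R = g • g⁻¹ • R := by rw [smul_inv_smul]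
    _ = g • Q := by rw [h6]

end DKSmul

open Pointwise in
theorem stmt14 (G : SimpleGraph V) (hG : G.Connected) (𝒞 : Set (Set V)) (κ : ℕ)
    (h : IsThinCutSystem G 𝒞 κ)
    (Γ : Type*) [Group Γ] [MulAction Γ V]
    (hadj : ∀ (g : Γ) (u v : V), G.Adj u v ↔ G.Adj (g • u) (g • v))
    (hinv : ∀ (g : Γ), ∀ C ∈ 𝒞, g • C ∈ 𝒞)
    (htrans : ∀ u v : V, ∃ g : Γ, g • u = v) :
    ¬ ∃ Q : Set V, IsSlice G 𝒞 Q := by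
  classical
  rintro ⟨Q, ⟨⟨C, hC, hQcomp⟩, hQnot⟩⟩
  -- Package the analysis of a slice.
  have slice_facts : ∀ (C' Q' : Set V), C' ∈ 𝒞 → IsCompOf G Q' (bdry G C')ᶜ →
      Q' ∉ 𝒞 → IsCompOf G Q' (cstar G C') ∧ (¬ ∃ E ∈ 𝒞, E ⊆ Q') := by
    intro C' Q' hC' hQ' hQn'
    have hcases := DK.comp_bdry_cases (h.toIsCutSystem.conn C' hC') hQ'
    have hQcs : IsCompOf G Q' (cstar G C') := by
      rcases hcases with rfl | hh
      · exact absurd hC' hQn'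
      · exact hh
    refine ⟨hQcs, ?_⟩
    rintro ⟨E, hE, hEQ⟩
    -- a1 with C = D = C' shows Q' ∈ 𝒞
    have hOpp : OppCorners G C' C' (cstar G C' ∩ cstar G C') (C' ∩ C') :=
      Or.inr (Or.inl ⟨rfl, rfl⟩)
    have hAcut : ∃ E' ∈ 𝒞, E' ⊆ cstar G C' ∩ cstar G C' := by
      exact ⟨E, hE, by rw [Set.inter_self]; exact hEQ.trans hQcs.1⟩
    have hBcut : ∃ E' ∈ 𝒞, E' ⊆ C' ∩ C' := ⟨C', hC', by rw [Set.inter_self]⟩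
    have := h.toIsCutSystem.a1 C' hC' C' hC' _ _ hOpp hAcut hBcut Q'
      (Or.inl (by rwa [Set.inter_self])) ⟨E, hE, hEQ⟩
    exact hQn' this
  obtain ⟨hQcs, hQfree⟩ := slice_facts C Q hC hQcomp hQnot
  -- the boundary of Q is nonempty
  have hQne : Q.Nonempty := DK.connSet_nonempty hQcomp.2.1
  have hQcne : Qᶜ.Nonempty := by
    obtain ⟨c, hc⟩ := h.toIsCutSystem.nonempty C hC
    exact ⟨c, fun hcQ => (DK.cstar_spec (hQcs.1 hcQ)).1 hc⟩
  obtain ⟨w, hw⟩ := DK.bdry_nonempty hG hQne hQcne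
  obtain ⟨hwQ, u, huQ, hadjuw⟩ := hw
  obtain ⟨q₀, hq₀⟩ := hQne
  obtain ⟨g, hg⟩ := htrans q₀ w
  -- the translated slice S
  set S : Set V := g • Q with hSdef
  set C' : Set V := g • C with hC'def
  have hC'𝒞 : C' ∈ 𝒞 := hinv g C hC
  have hScomp : IsCompOf G S (bdry G C')ᶜ := by
    have h1 : IsCompOf G (g • Q) (g • (bdry G C)ᶜ) := DK.isCompOf_smul hadj g hQcomp
    have h2 : (g • (bdry G C)ᶜ : Set V) = (bdry G C')ᶜ := by
      rw [hC'def, DK.bdry_smul hadj g]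
      ext y
      rw [Set.mem_smul_set_iff_inv_smul_mem, Set.mem_compl_iff, Set.mem_compl_iff,
        Set.mem_smul_set_iff_inv_smul_mem]
    rwa [h2] at h1
  have hSnot : S ∉ 𝒞 := by
    intro hh
    have := hinv g⁻¹ S hh
    rw [hSdef, inv_smul_smul] at this
    exact hQnot this
  obtain ⟨hScs, hSfree⟩ := slice_facts C' S hC'𝒞 hScomp hSnot
  -- key lemma both ways
  have h1 : Q ∩ bdry G C' = ∅ := DK.key h hC hC'𝒞 hQcs hQfree
  have h2 : S ∩ bdry G C = ∅ := DK.key h hC'𝒞 hC hScs hSfree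
  have hNS : bdry G S ⊆ bdry G C' := DK.bdry_comp_subset hScomp
  have hwS : w ∈ S := ⟨q₀, hq₀, hg⟩
  -- u is in S
  have huS : u ∈ S := by
    by_contra hus
    have hbd : u ∈ bdry G S := DK.mem_bdry_of_adj hwS hus hadjuw.symm
    have : u ∈ Q ∩ bdry G C' := ⟨huQ, hNS hbd⟩
    rw [h1] at this
    exact this
  -- S ⊆ Q by a reachability induction
  have hSQ : S ⊆ Q := by
    intro y hyS
    have hreach : DKReach G S u y := DK.connSet_reach hScomp.2.1 huS hyS
    clear hyS
    induction hreach with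
    | refl => exact huQ
    | tail h₁ hstep ih =>
        rename_i b c
        have hbQ : b ∈ Q := ih
        have hcS : c ∈ S := hstep.1
        have hcNC : c ∉ bdry G C := by
          intro hcc
          have : c ∈ S ∩ bdry G C := ⟨hcS, hcc⟩
          rw [h2] at this
          exact this
        have hcC : c ∉ C := fun hcc =>
          DK.adj_cstar_not_mem (hQcs.1 hbQ) hstep.2 hcc
        have hccs : c ∈ cstar G C := DK.mem_cstar hcC hcNC
        exact DK.mem_comp_of_adj hQcs hccs hbQ hstep.2
  exact hwQ (hSQ hwS)
end

section
/- For every integer k and every pair x, y of vertices in a connected graph, there are only finitely many tight x-y-separators of order k. -/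
variable {V : Type*}

section helper
variable {G : SimpleGraph V}

lemma connSet_reachable {C : Set V} (h : ConnSet G C)
    {a b : V} (ha : a ∈ C) (hb : b ∈ C) : G.Reachable a b :=
  (h.preconnected ⟨a, ha⟩ ⟨b, hb⟩).map (SimpleGraph.Embedding.induce C).toHom

lemma connSet_preimage {T Q : Set V} (hQT : Q ⊆ T) :
    ConnSet (G.induce T) (Subtype.val ⁻¹' Q) ↔ ConnSet G Q := by
  exact SimpleGraph.Iso.connected_iff
    { toFun := fun a => ⟨a.1.1, a.2⟩
      invFun := fun b => ⟨⟨b.1, hQT b.2⟩, b.2⟩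
      left_inv := fun a => rfl
      right_inv := fun b => rfl
      map_rel_iff' := Iff.rfl }

lemma isCompOf_preimage {T A S : Set V} (hST : Sᶜ ⊆ T) (h : IsCompOf G A Sᶜ) :
    IsCompOf (G.induce T) (Subtype.val ⁻¹' A) (Subtype.val ⁻¹' S)ᶜ := by
  obtain ⟨hAS, hconn, hmax⟩ := h
  have hAT : A ⊆ T := hAS.trans hST
  refine ⟨?_, (connSet_preimage hAT).2 hconn, ?_⟩
  · rw [← Set.preimage_compl]; exact Set.preimage_mono hAS
  · intro R hQR hRS hconnR
    have hR' : Subtype.val ⁻¹' (Subtype.val '' R) = R :=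
      Set.preimage_image_eq R Subtype.val_injective
    have hval : Subtype.val '' R ⊆ Sᶜ := by
      rintro u ⟨w, hw, rfl⟩
      exact hRS hw
    have hA : A ⊆ Subtype.val '' R := fun a ha => ⟨⟨a, hAT ha⟩, hQR ha, rfl⟩
    have hconn' : ConnSet G (Subtype.val '' R) := by
      rw [← connSet_preimage (T := T)
        (fun u hu => by obtain ⟨w, _, rfl⟩ := hu; exact w.2), hR']
      exact hconnR
    have hRA := hmax _ hA hval hconn'
    rw [← hRA, hR']

lemma mem_comp_of_walk {A S : Set V} (h : IsCompOf G A Sᶜ) {a b : V}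
    (ha : a ∈ A) (p : G.Walk a b) (hp : ∀ w ∈ p.support, w ∈ Sᶜ) : b ∈ A := by
  obtain ⟨hAS, hconn, hmax⟩ := h
  have hsub : A ∪ {w | w ∈ p.support} ⊆ Sᶜ := Set.union_subset hAS hp
  have hconn2 : ConnSet G (A ∪ {w | w ∈ p.support}) :=
    SimpleGraph.induce_union_connected hconn.preconnected p.connected_induce_support.preconnected
      ⟨a, ha, p.start_mem_support⟩
  have := hmax _ Set.subset_union_left hsub hconn2
  rw [← this]; exact Or.inr p.end_mem_support

lemma tightSep_preimage {x y v : V} {S : Set V} (hv : v ∈ S)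
    (hx : x ≠ v) (hy : y ≠ v) (h : TightSep G x y S) :
    TightSep (G.induce ({v}ᶜ : Set V)) ⟨x, hx⟩ ⟨y, hy⟩ (Subtype.val ⁻¹' S) := by
  obtain ⟨A, B, hA, hB, hAB, hxA, hyB, htight⟩ := h
  have hST : Sᶜ ⊆ ({v}ᶜ : Set V) := fun u hu he => hu (he ▸ hv)
  have hAT : A ⊆ ({v}ᶜ : Set V) := hA.1.trans hST
  have hBT : B ⊆ ({v}ᶜ : Set V) := hB.1.trans hST
  refine ⟨Subtype.val ⁻¹' A, Subtype.val ⁻¹' B, isCompOf_preimage hST hA,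
    isCompOf_preimage hST hB, ?_, hxA, hyB, ?_⟩
  · intro he
    apply hAB
    ext u
    constructor
    · intro hu
      have h1 : (⟨u, hAT hu⟩ : ↥({v}ᶜ : Set V)) ∈ Subtype.val ⁻¹' A := hu
      rw [he] at h1; exact h1
    · intro hu
      have h1 : (⟨u, hBT hu⟩ : ↥({v}ᶜ : Set V)) ∈ Subtype.val ⁻¹' B := hu
      rw [← he] at h1; exact h1
  · rintro ⟨u, hu⟩ hus
    obtain ⟨⟨a, haA, hadj⟩, ⟨b, hbB, hbadj⟩⟩ := htight u hus
    exact ⟨⟨⟨a, hAT haA⟩, haA, hadj⟩, ⟨⟨b, hBT hbB⟩, hbB, hbadj⟩⟩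

end helper

universe u

lemma tight_aux : ∀ (k : ℕ), ∀ {V : Type u} (G : SimpleGraph V) (x y : V),
    {S : Set V | TightSep G x y S ∧ S.Finite ∧ S.ncard = k}.Finite := by
  intro k
  induction k with
  | zero =>
    intro V G x y
    apply Set.Finite.subset (Set.finite_singleton ∅)
    rintro S ⟨-, hfin, hcard⟩
    exact Set.mem_singleton_iff.2 ((Set.ncard_eq_zero hfin).1 hcard)
  | succ n ih =>
    intro V G x y
    by_cases hr : G.Reachable x y
    · obtain ⟨p⟩ := hr
      have hcover : {S : Set V | TightSep G x y S ∧ S.Finite ∧ S.ncard = n + 1} ⊆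
          ⋃ v ∈ {w | w ∈ p.support},
            {S : Set V | (TightSep G x y S ∧ S.Finite ∧ S.ncard = n + 1) ∧ v ∈ S} := by
        rintro S ⟨hS, hfin, hcard⟩
        obtain ⟨w, hw, hwS⟩ : ∃ w ∈ p.support, w ∈ S := by
          by_contra hno
          push_neg at hno
          obtain ⟨A, B, hA, hB, hAB, hxA, hyB, -⟩ := hS
          have hyA : y ∈ A := mem_comp_of_walk hA hxA p (fun w hw => hno w hw)
          have h1 := hA.2.2 (A ∪ B) Set.subset_union_left (Set.union_subset hA.1 hB.1)
            (SimpleGraph.induce_union_connected hA.2.1.preconnected hB.2.1.preconnected ⟨y, hyA, hyB⟩)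
          have h2 := hB.2.2 (A ∪ B) Set.subset_union_right (Set.union_subset hA.1 hB.1)
            (SimpleGraph.induce_union_connected hA.2.1.preconnected hB.2.1.preconnected ⟨y, hyA, hyB⟩)
          exact hAB (h1.symm.trans h2)
        exact Set.mem_biUnion hw ⟨⟨hS, hfin, hcard⟩, hwS⟩
      apply Set.Finite.subset _ hcover
      apply Set.Finite.biUnion (p.support.finite_toSet)
      intro v _
      by_cases hxv : x = v
      · apply Set.Finite.subset (Set.finite_empty)
        rintro S ⟨⟨⟨A, B, hA, -, -, hxA, -, -⟩, -, -⟩, hvS⟩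
        exact absurd hvS (hxv ▸ hA.1 hxA)
      by_cases hyv : y = v
      · apply Set.Finite.subset (Set.finite_empty)
        rintro S ⟨⟨⟨A, B, -, hB, -, -, hyB, -⟩, -, -⟩, hvS⟩
        exact absurd hvS (hyv ▸ hB.1 hyB)
      · have hinj : Set.InjOn
            (fun S : Set V => (Subtype.val ⁻¹' S : Set ↥({v}ᶜ : Set V)))
            {S : Set V | (TightSep G x y S ∧ S.Finite ∧ S.ncard = n + 1) ∧ v ∈ S} := by
          intro S1 h1 S2 h2 he
          have he' : (Subtype.val ⁻¹' S1 : Set ↥({v}ᶜ : Set V)) = Subtype.val ⁻¹' S2 := he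
          ext u
          by_cases huv : u = v
          · subst huv; simp [h1.2, h2.2]
          · constructor
            · intro hu
              have : (⟨u, huv⟩ : ↥({v}ᶜ : Set V)) ∈ Subtype.val ⁻¹' S1 := hu
              rw [he'] at this; exact this
            · intro hu
              have : (⟨u, huv⟩ : ↥({v}ᶜ : Set V)) ∈ Subtype.val ⁻¹' S2 := hu
              rw [← he'] at this; exact this
        have himg : (fun S : Set V => (Subtype.val ⁻¹' S : Set ↥({v}ᶜ : Set V))) ''
              {S : Set V | (TightSep G x y S ∧ S.Finite ∧ S.ncard = n + 1) ∧ v ∈ S} ⊆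
            {S' : Set ↥({v}ᶜ : Set V) |
              TightSep (G.induce ({v}ᶜ : Set V)) ⟨x, hxv⟩ ⟨y, hyv⟩ S' ∧
              S'.Finite ∧ S'.ncard = n} := by
          rintro - ⟨S, ⟨⟨hS, hfin, hcard⟩, hvS⟩, rfl⟩
          refine ⟨tightSep_preimage hvS hxv hyv hS,
            hfin.preimage Subtype.val_injective.injOn, ?_⟩
          have himage : Subtype.val '' (Subtype.val ⁻¹' S : Set ↥({v}ᶜ : Set V)) = S \ {v} := by
            rw [Set.image_preimage_eq_inter_range, Subtype.range_coe, Set.diff_eq]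
          have hc : (Subtype.val ⁻¹' S : Set ↥({v}ᶜ : Set V)).ncard = (S \ {v}).ncard := by
            rw [← himage]
            exact (Set.ncard_image_of_injective _ Subtype.val_injective).symm
          have hins : (insert v (S \ {v})).ncard = (S \ {v}).ncard + 1 :=
            Set.ncard_insert_of_notMem (fun h => h.2 rfl) hfin.diff
          rw [Set.insert_diff_singleton, Set.insert_eq_of_mem hvS, hcard] at hins
          show (Subtype.val ⁻¹' S : Set ↥({v}ᶜ : Set V)).ncard = n
          rw [hc]; omega
        exact Set.Finite.of_finite_image
          (Set.Finite.subset (ih (G.induce ({v}ᶜ : Set V)) ⟨x, hxv⟩ ⟨y, hyv⟩) himg) hinj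
    · apply Set.Finite.subset (Set.finite_singleton ∅)
      rintro S ⟨⟨A, B, hA, hB, -, hxA, hyB, htight⟩, -, -⟩
      rw [Set.mem_singleton_iff]
      by_contra hne
      obtain ⟨s, hs⟩ := Set.nonempty_iff_ne_empty.2 hne
      obtain ⟨⟨a, haA, hadj⟩, ⟨b, hbB, hbadj⟩⟩ := htight s hs
      exact hr (((connSet_reachable hA.2.1 hxA haA).trans hadj.symm.reachable).trans
        (hbadj.reachable.trans (connSet_reachable hB.2.1 hbB hyB)))


theorem stmt15 (G : SimpleGraph V) (hG : G.Connected) (k : ℕ) (x y : V) :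
    {S : Set V | TightSep G x y S ∧ S.Finite ∧ S.ncard = k}.Finite := by
  exact tight_aux k G x y
end
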